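/- arXiv:2208.12101 — 9 statements merged into one kernel-verified Lean document; each statement's English description precedes it below -/
import Mathlib

section
/- Let Φ be a Hausdorff topological space equipped with a bornology 𝔹 (a collection of nonempty subsets), and let S(t) be a semigroup on Φ possessing a compact 𝔹-attracting set 𝓑 (for every B ∈ 𝔹 and every neighbourhood O of 𝓑 there is T with S(t)B ⊆ O for t ≥ T). Then the set 𝓐 := closure(⋃_{B∈𝔹} ω(B)) is a 𝔹-attractor: it is compact, it attracts every B ∈ 𝔹, and it is minimal (by inclusion) among compact sets attracting every B ∈ 𝔹. -/
open Set Filter Topology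

/-- The ω-limit set of `B` under the semigroup `S`:
`ω(B) = ⋂_{T ≥ 0} closure (⋃_{t ≥ T} S(t)B)`. -/
def omegaLimitSet {Φ : Type*} [TopologicalSpace Φ] (S : ℝ → Φ → Φ) (B : Set Φ) : Set Φ :=
  ⋂ T ∈ Ici (0 : ℝ), closure (⋃ t ∈ Ici T, S t '' B)

/-- `K` attracts `B` under the semigroup `S`: for every open neighbourhood `O` of `K`
there is `T ≥ 0` with `S(t)B ⊆ O` for all `t ≥ T`. -/
def Attracts {Φ : Type*} [TopologicalSpace Φ] (S : ℝ → Φ → Φ) (K B : Set Φ) : Prop :=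
  ∀ O : Set Φ, IsOpen O → K ⊆ O → ∃ T : ℝ, 0 ≤ T ∧ ∀ t ≥ T, S t '' B ⊆ O

/-!
A compact set `K` attracting `B` contains `ω(B)`, since in a Hausdorff space a point outside `K`
has a neighbourhood disjoint from a neighbourhood of `K`. Conversely `ω(B)` attracts `B`: given
an open `O ⊇ ω(B)`, the compact set `K \ O` misses the intersection of the decreasing closed
tails of the orbit of `B`, hence misses one tail; and `B` eventually enters the open set
`O ∪ (tail)ᶜ ⊇ K` while staying in the tail, i.e. it enters `O`. So `𝓐` lies between the sets
`ω(B)`, which attract, and every compact attracting set, in particular `𝓑`.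
-/

section

variable {Φ : Type*} [TopologicalSpace Φ] {S : ℝ → Φ → Φ} {K B : Set Φ}

lemma Attracts.mono {K' : Set Φ} (h : Attracts S K B) (hKK' : K ⊆ K') : Attracts S K' B :=
  fun O hO hK'O => h O hO (hKK'.trans hK'O)

lemma omegaLimitSet_subset_of_attracts [T2Space Φ] (hK : IsCompact K) (h : Attracts S K B) :
    omegaLimitSet S B ⊆ K := by
  intro x hx
  by_contra hxK
  obtain ⟨U, V, hU, hV, hKU, hxV, hUV⟩ := hK.separation_of_notMem hxK
  obtain ⟨T, hT, hBU⟩ := h U hU hKU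
  have hx' : x ∈ closure (⋃ t ∈ Ici T, S t '' B) := mem_iInter₂.mp hx T hT
  have hx'' : x ∈ closure U := closure_mono (iUnion₂_subset hBU) hx'
  exact (closure_minimal hUV.subset_compl_right hV.isClosed_compl) hx'' hxV

lemma exists_disjoint_closure_iUnion_image_of_disjoint_omegaLimitSet {C : Set Φ}
    (hC : IsCompact C) (hCω : Disjoint C (omegaLimitSet S B)) :
    ∃ T ≥ 0, Disjoint C (closure (⋃ t ∈ Ici T, S t '' B)) := by
  let tail : Ici (0 : ℝ) → Set Φ := fun T => closure (⋃ t ∈ Ici (T : ℝ), S t '' B)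
  have htail_anti : Antitone tail := fun T₁ T₂ h₁₂ =>
    closure_mono (biUnion_subset_biUnion_left (Ici_subset_Ici.mpr h₁₂))
  have hω : ⋂ T, tail T = omegaLimitSet S B :=
    (biInter_eq_iInter (Ici 0) fun T _ => closure (⋃ t ∈ Ici T, S t '' B)).symm
  obtain ⟨T, hT⟩ := hC.elim_directed_family_closed tail (fun _ => isClosed_closure)
    (by rw [hω, ← disjoint_iff_inter_eq_empty]; exact hCω) htail_anti.directed_ge
  exact ⟨T, T.2, disjoint_iff_inter_eq_empty.mpr hT⟩

lemma attracts_omegaLimitSet (hK : IsCompact K) (h : Attracts S K B) :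
    Attracts S (omegaLimitSet S B) B := by
  intro O hO hωO
  obtain ⟨T₁, hT₁, hdisj⟩ := exists_disjoint_closure_iUnion_image_of_disjoint_omegaLimitSet
    (hK.diff hO) (disjoint_sdiff_left.mono_right hωO)
  obtain ⟨T₂, hT₂, hBattr⟩ := h (O ∪ (closure (⋃ t ∈ Ici T₁, S t '' B))ᶜ)
    (hO.union isClosed_closure.isOpen_compl) fun x hxK => by
      by_cases hxO : x ∈ O
      · exact Or.inl hxO
      · exact Or.inr (hdisj.notMem_of_mem_left ⟨hxK, hxO⟩)
  refine ⟨max T₁ T₂, hT₁.trans (le_max_left _ _), fun t ht x hx => ?_⟩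
  have hx_tail : x ∈ closure (⋃ t ∈ Ici T₁, S t '' B) :=
    subset_closure (mem_biUnion (mem_Ici.mpr ((le_max_left _ _).trans ht)) hx)
  exact (hBattr t ((le_max_right _ _).trans ht) hx).resolve_right (not_not_intro hx_tail)

end

theorem stmt_3_general {Φ : Type*} [TopologicalSpace Φ] [T2Space Φ]
    (S : ℝ → Φ → Φ)
    (𝔹 : Set (Set Φ))
    (𝓑 : Set Φ) (h𝓑 : IsCompact 𝓑)
    (hattr : ∀ B ∈ 𝔹, Attracts S 𝓑 B) :
    IsCompact (closure (⋃ B ∈ 𝔹, omegaLimitSet S B)) ∧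
    (∀ B ∈ 𝔹, Attracts S (closure (⋃ B ∈ 𝔹, omegaLimitSet S B)) B) ∧
    (∀ K : Set Φ, IsCompact K → (∀ B ∈ 𝔹, Attracts S K B) →
      closure (⋃ B ∈ 𝔹, omegaLimitSet S B) ⊆ K) := by
  have hminimal : ∀ K : Set Φ, IsCompact K → (∀ B ∈ 𝔹, Attracts S K B) →
      closure (⋃ B ∈ 𝔹, omegaLimitSet S B) ⊆ K := fun K hK hKattr =>
    closure_minimal (iUnion₂_subset fun B hB => omegaLimitSet_subset_of_attracts hK (hKattr B hB))
      hK.isClosed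
  refine ⟨h𝓑.of_isClosed_subset isClosed_closure (hminimal 𝓑 h𝓑 hattr), fun B hB => ?_, hminimal⟩
  exact (attracts_omegaLimitSet h𝓑 (hattr B hB)).mono
    ((subset_biUnion_of_mem (u := fun B => omegaLimitSet S B) hB).trans subset_closure)

/-- General attractor existence theorem: if a semigroup `S` on a Hausdorff space with a
bornology `𝔹` (a collection of nonempty sets) possesses a compact `𝔹`-attracting set `𝓑`,
then `𝓐 := closure (⋃_{B ∈ 𝔹} ω(B))` is a `𝔹`-attractor: it is compact, it attracts
every `B ∈ 𝔹`, and it is contained in any compact set attracting every `B ∈ 𝔹`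
(minimality by inclusion). -/
theorem stmt_3 {Φ : Type*} [TopologicalSpace Φ] [T2Space Φ]
    (S : ℝ → Φ → Φ)
    (hS0 : S 0 = id)
    (hSadd : ∀ t s : ℝ, 0 ≤ t → 0 ≤ s → S (t + s) = S t ∘ S s)
    (𝔹 : Set (Set Φ)) (h𝔹 : ∀ B ∈ 𝔹, B.Nonempty)
    (𝓑 : Set Φ) (h𝓑 : IsCompact 𝓑)
    (hattr : ∀ B ∈ 𝔹, Attracts S 𝓑 B) :
    IsCompact (closure (⋃ B ∈ 𝔹, omegaLimitSet S B)) ∧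
    (∀ B ∈ 𝔹, Attracts S (closure (⋃ B ∈ 𝔹, omegaLimitSet S B)) B) ∧
    (∀ K : Set Φ, IsCompact K → (∀ B ∈ 𝔹, Attracts S K B) →
      closure (⋃ B ∈ 𝔹, omegaLimitSet S B) ⊆ K) :=
  stmt_3_general S 𝔹 𝓑 h𝓑 hattr
end

section
/- Let Φ be a Hausdorff topological space with bornology 𝔹, S(t) a semigroup with all maps S(t) continuous and possessing a 𝔹-attractor 𝓐 (obtained from a compact attracting set). Then 𝓐 is strictly invariant: S(t)𝓐 = 𝓐 for all t ≥ 0. -/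
open Set Filter Topology

theorem image_biUnion_Ici_image_subset {Φ : Type*} {S : ℝ → Φ → Φ}
    (hSadd : ∀ t s : ℝ, 0 ≤ t → 0 ≤ s → S (t + s) = S t ∘ S s) {t T : ℝ} (ht : 0 ≤ t)
    (hT : 0 ≤ T) (B : Set Φ) :
    S t '' ⋃ s ∈ Ici T, S s '' B ⊆ ⋃ s ∈ Ici T, S s '' B := by
  rw [image_iUnion₂]
  refine iUnion₂_subset fun s hs => ?_
  have hs : T ≤ s := hs
  rw [← image_comp, ← hSadd t s ht (hT.trans hs)]
  exact subset_biUnion_of_mem (u := fun r => S r '' B) (show T ≤ t + s by linarith)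

section Semigroup

variable {Φ : Type*} [TopologicalSpace Φ] {S : ℝ → Φ → Φ} {t : ℝ}

theorem image_omegaLimitSet_subset
    (hSadd : ∀ t s : ℝ, 0 ≤ t → 0 ≤ s → S (t + s) = S t ∘ S s) (ht : 0 ≤ t)
    (hcont : Continuous (S t)) (B : Set Φ) :
    S t '' omegaLimitSet S B ⊆ omegaLimitSet S B := by
  refine subset_iInter₂ fun T (hT : 0 ≤ T) => ?_
  calc S t '' omegaLimitSet S B
      ⊆ S t '' closure (⋃ s ∈ Ici T, S s '' B) :=
        image_mono (biInter_subset_of_mem (mem_Ici.2 hT))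
    _ ⊆ closure (S t '' ⋃ s ∈ Ici T, S s '' B) := image_closure_subset_closure_image hcont
    _ ⊆ closure (⋃ s ∈ Ici T, S s '' B) :=
        closure_mono (image_biUnion_Ici_image_subset hSadd ht hT B)

theorem Attracts.image {K B : Set Φ} (hK : Attracts S K B)
    (hSadd : ∀ t s : ℝ, 0 ≤ t → 0 ≤ s → S (t + s) = S t ∘ S s) (ht : 0 ≤ t)
    (hcont : Continuous (S t)) :
    Attracts S (S t '' K) B := by
  intro O hO hKO
  obtain ⟨T, hT, hTO⟩ := hK (S t ⁻¹' O) (hO.preimage hcont) (image_subset_iff.1 hKO)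
  refine ⟨T + t, by linarith, fun s hs => ?_⟩
  have hSs : S s = S t ∘ S (s - t) := by
    rw [← hSadd t (s - t) ht (by linarith), add_sub_cancel]
  rw [hSs, image_comp, image_subset_iff]
  exact hTO (s - t) (by linarith)

end Semigroup

theorem stmt_4_general {Φ : Type*} [TopologicalSpace Φ]
    (S : ℝ → Φ → Φ)
    (hSadd : ∀ t s : ℝ, 0 ≤ t → 0 ≤ s → S (t + s) = S t ∘ S s)
    (hcont : ∀ t : ℝ, 0 ≤ t → Continuous (S t))
    (𝔹 : Set (Set Φ))
    (𝓐 : Set Φ)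
    (h𝓐 : 𝓐 = closure (⋃ B ∈ 𝔹, omegaLimitSet S B))
    (h𝓐c : IsCompact 𝓐)
    (h𝓐attr : ∀ B ∈ 𝔹, Attracts S 𝓐 B)
    (h𝓐min : ∀ K : Set Φ, IsCompact K → (∀ B ∈ 𝔹, Attracts S K B) → 𝓐 ⊆ K) :
    ∀ t : ℝ, 0 ≤ t → S t '' 𝓐 = 𝓐 := by
  intro t ht
  refine Subset.antisymm ?_ ?_
  · rw [h𝓐]
    calc S t '' closure (⋃ B ∈ 𝔹, omegaLimitSet S B)
        ⊆ closure (⋃ B ∈ 𝔹, S t '' omegaLimitSet S B) := by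
          rw [← image_iUnion₂]; exact image_closure_subset_closure_image (hcont t ht)
      _ ⊆ closure (⋃ B ∈ 𝔹, omegaLimitSet S B) :=
          closure_mono <| iUnion₂_mono fun B _ =>
            image_omegaLimitSet_subset hSadd ht (hcont t ht) B
  · exact h𝓐min _ (h𝓐c.image (hcont t ht)) fun B hB =>
      (h𝓐attr B hB).image hSadd ht (hcont t ht)

/-- Strict invariance of the attractor: if all maps `S(t)` are continuous and `𝓐` is the
`𝔹`-attractor obtained from a compact attracting set `𝓑` (i.e. `𝓐` is the closure of the
union of the ω-limit sets, it is compact, attracts every `B ∈ 𝔹` and is minimal), then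
`S(t)𝓐 = 𝓐` for all `t ≥ 0`. -/
theorem stmt_4 {Φ : Type*} [TopologicalSpace Φ] [T2Space Φ]
    (S : ℝ → Φ → Φ)
    (hS0 : S 0 = id)
    (hSadd : ∀ t s : ℝ, 0 ≤ t → 0 ≤ s → S (t + s) = S t ∘ S s)
    (hcont : ∀ t : ℝ, 0 ≤ t → Continuous (S t))
    (𝔹 : Set (Set Φ)) (h𝔹 : ∀ B ∈ 𝔹, B.Nonempty)
    (𝓑 : Set Φ) (h𝓑 : IsCompact 𝓑)
    (hattr : ∀ B ∈ 𝔹, Attracts S 𝓑 B)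
    (𝓐 : Set Φ)
    (h𝓐 : 𝓐 = closure (⋃ B ∈ 𝔹, omegaLimitSet S B))
    (h𝓐c : IsCompact 𝓐)
    (h𝓐attr : ∀ B ∈ 𝔹, Attracts S 𝓐 B)
    (h𝓐min : ∀ K : Set Φ, IsCompact K → (∀ B ∈ 𝔹, Attracts S K B) → 𝓐 ⊆ K) :
    ∀ t : ℝ, 0 ≤ t → S t '' 𝓐 = 𝓐 :=
  stmt_4_general S hSadd hcont 𝔹 𝓐 h𝓐 h𝓐c h𝓐attr h𝓐min
end

section
/- Let Φ and Φ₁ be Banach spaces with Φ₁ compactly embedded in Φ, let 𝓐 ⊆ Φ₁ be a bounded set, and let S : 𝓐 → 𝓐 satisfy S(𝓐) = 𝓐 and the smoothing/squeezing estimate ‖S(u₁) − S(u₂)‖_{Φ₁} ≤ L‖u₁ − u₂‖_Φ for all u₁,u₂ ∈ 𝓐 and some L > 0. Then the fractal (box-counting) dimension of 𝓐 in Φ₁ is finite and satisfies dim_f(𝓐, Φ₁) ≤ H_{1/(4L)}(Φ₁ ↪ Φ), where H_ν(Φ₁ ↪ Φ) = log₂ N_ν is the Kolmogorov ν-entropy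 of the unit ball of Φ₁ viewed as a precompact subset of Φ (N_ν is the minimal number of ν-balls of Φ needed to cover it). -/
open Set Filter Topology

/-- The minimal number of `ε`-balls of `X` needed to cover `K`. -/
noncomputable def coveringNumber {X : Type*} [PseudoMetricSpace X] (ε : ℝ) (K : Set X) : ℕ :=
  sInf {n : ℕ | ∃ t : Finset X, t.card = n ∧ K ⊆ ⋃ x ∈ t, Metric.ball x ε}

/-- The Kolmogorov `ε`-entropy `H_ε(K) = log₂ N_ε(K)`. -/
noncomputable def kolmogorovEntropy {X : Type*} [PseudoMetricSpace X] (ε : ℝ) (K : Set X) : ℝ :=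
  Real.logb 2 (coveringNumber ε K)

/-- The (upper) fractal (box-counting) dimension
`dim_f(K) = limsup_{ε → 0⁺} H_ε(K) / log₂(1/ε)`. -/
noncomputable def fractalDim {X : Type*} [PseudoMetricSpace X] (K : Set X) : ℝ :=
  Filter.limsup (fun ε : ℝ => kolmogorovEntropy ε K / Real.logb 2 (1 / ε)) (𝓝[>] 0)

lemma coveringNumber_le {X : Type*} [PseudoMetricSpace X] {ε : ℝ} {K : Set X} {t : Finset X}
    (h : K ⊆ ⋃ x ∈ t, Metric.ball x ε) : coveringNumber ε K ≤ t.card :=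
  Nat.sInf_le ⟨t, rfl, h⟩

lemma exists_finset_cover {X : Type*} [PseudoMetricSpace X] {K : Set X}
    (h : TotallyBounded K) {ε : ℝ} (hε : 0 < ε) :
    ∃ t : Finset X, K ⊆ ⋃ x ∈ t, Metric.ball x ε := by
  obtain ⟨s, hfin, hsub⟩ := Metric.totallyBounded_iff.mp h ε hε
  exact ⟨hfin.toFinset, by simpa using hsub⟩

lemma coveringNumber_spec {X : Type*} [PseudoMetricSpace X] {K : Set X} {ε : ℝ}
    (h : ∃ t : Finset X, K ⊆ ⋃ x ∈ t, Metric.ball x ε) :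
    ∃ t : Finset X, t.card = coveringNumber ε K ∧ K ⊆ ⋃ x ∈ t, Metric.ball x ε := by
  obtain ⟨t, ht⟩ := h
  have : {n : ℕ | ∃ t : Finset X, t.card = n ∧ K ⊆ ⋃ x ∈ t, Metric.ball x ε}.Nonempty :=
    ⟨t.card, t, rfl, ht⟩
  exact Nat.sInf_mem this

/-- Ladyzhenskaya's squeezing theorem: if `Φ₁` is compactly embedded into `Φ` via `ι`,
`𝓐 ⊆ Φ₁` is bounded, `S(𝓐) = 𝓐` and `‖S u₁ - S u₂‖_{Φ₁} ≤ L ‖u₁ - u₂‖_Φ` on `𝓐`, then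
the fractal dimension of `𝓐` in `Φ₁` is bounded by the Kolmogorov `1/(4L)`-entropy of the
unit ball of `Φ₁` viewed as a (pre)compact subset of `Φ`. -/
theorem stmt_7 {Φ₁ Φ : Type*}
    [NormedAddCommGroup Φ₁] [NormedSpace ℝ Φ₁] [NormedAddCommGroup Φ] [NormedSpace ℝ Φ]
    (ι : Φ₁ →L[ℝ] Φ) (hinj : Function.Injective ι)
    (hcpt : IsCompact (closure (ι '' Metric.ball 0 1)))
    (𝓐 : Set Φ₁) (h𝓐 : Bornology.IsBounded 𝓐)
    (S : Φ₁ → Φ₁) (hinv : S '' 𝓐 = 𝓐)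
    (L : ℝ) (hL : 0 < L)
    (hsq : ∀ u₁ ∈ 𝓐, ∀ u₂ ∈ 𝓐, ‖S u₁ - S u₂‖ ≤ L * ‖ι u₁ - ι u₂‖) :
    fractalDim 𝓐 ≤ kolmogorovEntropy (1 / (4 * L)) (ι '' Metric.ball 0 1) := by
  classical
  set ν : ℝ := 1 / (4 * L) with hν_def
  have hν : 0 < ν := by positivity
  set N : ℕ := coveringNumber ν (ι '' Metric.ball 0 1) with hN_def
  set H : ℝ := Real.logb 2 N with hH_def
  -- total boundedness of the image of the unit ball
  have htb : TotallyBounded (ι '' Metric.ball 0 1) :=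
    hcpt.totallyBounded.subset subset_closure
  obtain ⟨tN, htN_card, htN⟩ := coveringNumber_spec (exists_finset_cover htb hν)
  have hN1 : 1 ≤ N := by
    rw [Nat.one_le_iff_ne_zero]
    intro h0
    have hc0 : tN.card = 0 := by rw [htN_card, ← hN_def, h0]
    rw [Finset.card_eq_zero] at hc0
    have hmem : (ι 0 : Φ) ∈ ι '' Metric.ball 0 1 :=
      ⟨0, by simp [Metric.mem_ball], rfl⟩
    have := htN hmem
    simp [hc0] at this
  have hH0 : 0 ≤ H := Real.logb_nonneg one_lt_two (by exact_mod_cast hN1)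
  -- RHS is H
  have hRHS : kolmogorovEntropy (1 / (4 * L)) (ι '' Metric.ball 0 1) = H := rfl
  rw [hRHS]
  -- empty case
  rcases eq_empty_or_nonempty 𝓐 with hA | hA
  · have : fractalDim 𝓐 = 0 := by
      have hc : ∀ ε : ℝ, coveringNumber ε 𝓐 = 0 := by
        intro ε
        have : coveringNumber ε 𝓐 ≤ (∅ : Finset Φ₁).card :=
          coveringNumber_le (by simp [hA])
        simpa using this
      have : (fun ε : ℝ => kolmogorovEntropy ε 𝓐 / Real.logb 2 (1 / ε)) = fun _ => 0 := by
        funext ε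
        simp [kolmogorovEntropy, hc ε]
      rw [fractalDim, this]
      exact limsup_const 0
    rw [this]; exact hH0
  -- scaling lemma: any ε-ball in Φ₁ maps into a union of N balls of radius ε * ν
  have scale : ∀ (x u : Φ₁) (ε : ℝ), 0 < ε → u ∈ Metric.ball x ε →
      ∃ y ∈ tN, ι u ∈ Metric.ball (ι x + ε • y) (ε * ν) := by
    intro x u ε hε hu
    set z : Φ₁ := ε⁻¹ • (u - x) with hz_def
    have hz : z ∈ Metric.ball (0 : Φ₁) 1 := by
      rw [Metric.mem_ball, dist_zero_right, hz_def, norm_smul, norm_inv,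
        Real.norm_of_nonneg hε.le]
      rw [Metric.mem_ball, dist_eq_norm] at hu
      rw [inv_mul_lt_iff₀ hε, mul_one]
      exact hu
    have : ι z ∈ ι '' Metric.ball 0 1 := ⟨z, hz, rfl⟩
    obtain ⟨y, hy, hyz⟩ := mem_iUnion₂.mp (htN this)
    refine ⟨y, hy, ?_⟩
    rw [Metric.mem_ball, dist_eq_norm]
    have key : ι u - (ι x + ε • y) = ε • (ι z - y) := by
      rw [hz_def, map_smul, map_sub, smul_sub, smul_inv_smul₀ hε.ne']
      abel
    rw [key, norm_smul, Real.norm_of_nonneg hε.le]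
    rw [Metric.mem_ball, dist_eq_norm] at hyz
    exact (mul_lt_mul_iff_right₀ hε).mpr hyz
  -- main recursion step
  have step : ∀ ε : ℝ, 0 < ε → ∀ s : Finset Φ₁, (𝓐 ⊆ ⋃ x ∈ s, Metric.ball x ε) →
      ∃ s' : Finset Φ₁, s'.card ≤ N * s.card ∧ 𝓐 ⊆ ⋃ x ∈ s', Metric.ball x (ε / 2) := by
    intro ε hε s hs
    set P : Φ₁ × Φ → Set Φ₁ :=
      fun p => {u | u ∈ 𝓐 ∧ ι u ∈ Metric.ball (ι p.1 + ε • p.2) (ε * ν)} with hP_def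
    set c : Φ₁ × Φ → Φ₁ := fun p => if h : (P p).Nonempty then S h.some else 0 with hc_def
    refine ⟨(s ×ˢ tN).image c, ?_, ?_⟩
    · calc ((s ×ˢ tN).image c).card ≤ (s ×ˢ tN).card := Finset.card_image_le
        _ = s.card * tN.card := Finset.card_product s tN
        _ = N * s.card := by rw [htN_card, mul_comm]
    · intro v hv
      rw [← hinv] at hv
      obtain ⟨u, hu, rfl⟩ := hv
      obtain ⟨x, hx, hux⟩ := mem_iUnion₂.mp (hs hu)
      obtain ⟨y, hy, huy⟩ := scale x u ε hε hux
      have hPne : (P (x, y)).Nonempty := ⟨u, hu, huy⟩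
      have hw := hPne.some_mem
      obtain ⟨hw𝓐, hwball⟩ := hw
      simp only [mem_iUnion]
      refine ⟨c (x, y), Finset.mem_image_of_mem c (Finset.mem_product.mpr ⟨hx, hy⟩), ?_⟩
      rw [Metric.mem_ball, dist_eq_norm]
      have hcv : c (x, y) = S hPne.some := dif_pos hPne
      rw [hcv]
      calc ‖S u - S hPne.some‖ ≤ L * ‖ι u - ι hPne.some‖ := hsq u hu _ hw𝓐
        _ < ε / 2 := by
          have h1 : ‖ι u - ι hPne.some‖ < 2 * (ε * ν) := by
            have d1 : dist (ι u) (ι x + ε • y) < ε * ν := huy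
            have d2 : dist (ι hPne.some) (ι x + ε • y) < ε * ν := hwball
            calc ‖ι u - ι hPne.some‖ = dist (ι u) (ι hPne.some) := (dist_eq_norm _ _).symm
              _ ≤ dist (ι u) (ι x + ε • y) + dist (ι hPne.some) (ι x + ε • y) :=
                dist_triangle_right _ _ _
              _ < 2 * (ε * ν) := by linarith
          calc L * ‖ι u - ι hPne.some‖ < L * (2 * (ε * ν)) := by
                exact (mul_lt_mul_iff_right₀ hL).mpr h1
            _ = ε / 2 := by rw [hν_def]; field_simp; ring
  -- bound radius for 𝓐
  obtain ⟨r, hr⟩ := h𝓐.subset_closedBall 0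
  set R : ℝ := max r 0 + 1 with hR_def
  have hR : 0 < R := by positivity
  have h𝓐R : ∀ u ∈ 𝓐, ‖u‖ < R := by
    intro u hu
    have h1 := hr hu
    rw [Metric.mem_closedBall, dist_zero_right] at h1
    calc ‖u‖ ≤ r := h1
      _ ≤ max r 0 := le_max_left _ _
      _ < R := by rw [hR_def]; linarith
  -- cover of ι '' 𝓐 at any radius
  have covA : ∀ δ : ℝ, 0 < δ → ∃ t : Finset Φ, (ι '' 𝓐) ⊆ ⋃ y ∈ t, Metric.ball y δ := by
    intro δ hδ
    obtain ⟨t, ht⟩ := exists_finset_cover htb (div_pos hδ hR)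
    refine ⟨t.image (fun y => R • y), ?_⟩
    rintro _ ⟨u, hu, rfl⟩
    have hmem : R⁻¹ • u ∈ Metric.ball (0 : Φ₁) 1 := by
      rw [Metric.mem_ball, dist_zero_right, norm_smul, norm_inv, Real.norm_of_nonneg hR.le,
        inv_mul_lt_iff₀ hR, mul_one]
      exact h𝓐R u hu
    obtain ⟨y, hy, hyz⟩ := mem_iUnion₂.mp (ht ⟨_, hmem, rfl⟩)
    refine mem_iUnion₂.mpr ⟨R • y, Finset.mem_image_of_mem _ hy, ?_⟩
    rw [Metric.mem_ball, dist_eq_norm]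
    have key : ι u - R • y = R • (ι (R⁻¹ • u) - y) := by
      rw [smul_sub, map_smul, smul_inv_smul₀ hR.ne']
    rw [key, norm_smul, Real.norm_of_nonneg hR.le]
    rw [Metric.mem_ball, dist_eq_norm] at hyz
    calc R * ‖ι (R⁻¹ • u) - y‖ < R * (δ / R) := (mul_lt_mul_iff_right₀ hR).mpr hyz
      _ = δ := by field_simp
  -- base cover of 𝓐 at radius 1
  have base : ∃ s₀ : Finset Φ₁, 𝓐 ⊆ ⋃ x ∈ s₀, Metric.ball x 1 := by
    obtain ⟨t, ht⟩ := covA (1 / (2 * L)) (by positivity)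
    set g : Φ → Φ₁ := fun y =>
      if h : ∃ u ∈ 𝓐, ι u ∈ Metric.ball y (1 / (2 * L)) then h.choose else 0 with hg_def
    refine ⟨t.image (fun y => S (g y)), ?_⟩
    intro v hv
    rw [← hinv] at hv
    obtain ⟨u, hu, rfl⟩ := hv
    obtain ⟨y, hy, huy⟩ := mem_iUnion₂.mp (ht ⟨u, hu, rfl⟩)
    have hex : ∃ w ∈ 𝓐, ι w ∈ Metric.ball y (1 / (2 * L)) := ⟨u, hu, huy⟩
    have hgy : g y = hex.choose := dif_pos hex
    obtain ⟨hw𝓐, hwb⟩ := hex.choose_spec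
    refine mem_iUnion₂.mpr ⟨S (g y), Finset.mem_image_of_mem _ hy, ?_⟩
    rw [Metric.mem_ball, dist_eq_norm, hgy]
    have h1 : ‖ι u - ι hex.choose‖ < 2 * (1 / (2 * L)) := by
      have d1 : dist (ι u) y < 1 / (2 * L) := huy
      have d2 : dist (ι hex.choose) y < 1 / (2 * L) := hwb
      calc ‖ι u - ι hex.choose‖ = dist (ι u) (ι hex.choose) := (dist_eq_norm _ _).symm
        _ ≤ dist (ι u) y + dist (ι hex.choose) y := dist_triangle_right _ _ _
        _ < 2 * (1 / (2 * L)) := by linarith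
    calc ‖S u - S hex.choose‖ ≤ L * ‖ι u - ι hex.choose‖ := hsq u hu _ hw𝓐
      _ < L * (2 * (1 / (2 * L))) := (mul_lt_mul_iff_right₀ hL).mpr h1
      _ = 1 := by field_simp
  obtain ⟨s₀, hs₀⟩ := base
  have hn₀ : 1 ≤ s₀.card := by
    rcases hA with ⟨v, hv⟩
    rw [Nat.one_le_iff_ne_zero]
    intro h0
    rw [Finset.card_eq_zero] at h0
    have := hs₀ hv
    simp [h0] at this
  -- iterate the squeezing step
  have iter : ∀ k : ℕ, ∃ s : Finset Φ₁,
      s.card ≤ s₀.card * N ^ k ∧ 𝓐 ⊆ ⋃ x ∈ s, Metric.ball x ((1 : ℝ) / 2 ^ k) := by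
    intro k
    induction k with
    | zero => exact ⟨s₀, by simp, by simpa using hs₀⟩
    | succ k ih =>
      obtain ⟨s, hcard, hcov⟩ := ih
      obtain ⟨s', hcard', hcov'⟩ := step ((1 : ℝ) / 2 ^ k) (by positivity) s hcov
      refine ⟨s', ?_, ?_⟩
      · calc s'.card ≤ N * s.card := hcard'
          _ ≤ N * (s₀.card * N ^ k) := Nat.mul_le_mul_left _ hcard
          _ = s₀.card * N ^ (k + 1) := by ring
      · have heq : (1 : ℝ) / 2 ^ (k + 1) = ((1 : ℝ) / 2 ^ k) / 2 := by ring
        rw [heq]; exact hcov'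
  set B : ℝ := Real.logb 2 s₀.card + H with hB_def
  have hB0 : 0 ≤ B :=
    add_nonneg (Real.logb_nonneg one_lt_two (by exact_mod_cast hn₀)) hH0
  -- the eventual bound
  have ev : ∀ c : ℝ, H < c → ∀ᶠ ε in 𝓝[>] (0 : ℝ),
      kolmogorovEntropy ε 𝓐 / Real.logb 2 (1 / ε) ≤ c := by
    intro c hc
    have hcH : 0 < c - H := sub_pos.mpr hc
    set M : ℝ := max 1 (B / (c - H)) with hM_def
    obtain ⟨K, hK⟩ := exists_nat_ge M
    set δ : ℝ := min 1 ((1 : ℝ) / 2 ^ K) with hδ_def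
    have hδ0 : 0 < δ := lt_min one_pos (by positivity)
    filter_upwards [Ioo_mem_nhdsGT_of_mem (⟨le_refl 0, hδ0⟩ : (0:ℝ) ∈ Ico 0 δ)] with ε hε
    obtain ⟨hε0, hεδ⟩ := hε
    have hε1 : ε < 1 := lt_of_lt_of_le hεδ (min_le_left _ _)
    have hεK : ε < (1 : ℝ) / 2 ^ K := lt_of_lt_of_le hεδ (min_le_right _ _)
    set l : ℝ := Real.logb 2 (1 / ε) with hl_def
    have h2K : (2 : ℝ) ^ K < 1 / ε := by
      rw [lt_div_iff₀ hε0]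
      calc (2:ℝ) ^ K * ε < 2 ^ K * (1 / 2 ^ K) :=
            (mul_lt_mul_iff_right₀ (by positivity)).mpr hεK
        _ = 1 := by field_simp
    have hKl : (K : ℝ) ≤ l := by
      have hKeq : ((K : ℝ)) = Real.logb 2 ((2 : ℝ) ^ K) := by
        rw [Real.logb_pow, Real.logb_self_eq_one (by norm_num : (1:ℝ) < 2), mul_one]
      rw [hKeq, hl_def]
      exact Real.logb_le_logb_of_le one_lt_two (by positivity) h2K.le
    have hMl : M ≤ l := le_trans hK hKl
    have hl1 : (1 : ℝ) ≤ l := le_trans (le_max_left _ _) hMl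
    have hl0 : (0:ℝ) < l := lt_of_lt_of_le one_pos hl1
    -- find the dyadic scale
    have hexn : ∃ n : ℕ, 1 / ε < 2 ^ n := pow_unbounded_of_one_lt _ one_lt_two
    set n : ℕ := Nat.find hexn with hn_def
    have hn : 1 / ε < 2 ^ n := Nat.find_spec hexn
    have hn1 : 1 ≤ n := by
      rw [Nat.one_le_iff_ne_zero]
      intro h0
      have h2 := hn
      rw [h0] at h2
      simp at h2
      have h3 : (1:ℝ) < 1 / ε := one_lt_one_div hε0 hε1
      rw [one_div] at h3
      linarith
    have hn' : ¬ (1 / ε < 2 ^ (n - 1)) := Nat.find_min hexn (by omega)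
    push_neg at hn'
    have hnl : (n : ℝ) ≤ l + 1 := by
      have h1 : ((n - 1 : ℕ) : ℝ) ≤ l := by
        have heq : ((n - 1 : ℕ) : ℝ) = Real.logb 2 ((2 : ℝ) ^ (n - 1 : ℕ)) := by
          rw [Real.logb_pow, Real.logb_self_eq_one (by norm_num : (1:ℝ) < 2), mul_one]
        rw [heq, hl_def]
        exact Real.logb_le_logb_of_le one_lt_two (by positivity) hn'
      have heq2 : ((n - 1 : ℕ) : ℝ) = (n : ℝ) - 1 := by
        rw [Nat.cast_sub hn1, Nat.cast_one]
      rw [heq2] at h1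
      linarith
    -- covering bound at ε
    obtain ⟨s, hcard, hcov⟩ := iter n
    have hsub : 𝓐 ⊆ ⋃ x ∈ s, Metric.ball x ε := by
      refine hcov.trans (iUnion₂_mono fun x _ => Metric.ball_subset_ball ?_)
      rw [div_le_iff₀ (by positivity)]
      rw [div_lt_iff₀ hε0] at hn
      nlinarith
    have hcn : coveringNumber ε 𝓐 ≤ s₀.card * N ^ n :=
      le_trans (coveringNumber_le hsub) hcard
    have hcn1 : 1 ≤ coveringNumber ε 𝓐 := by
      rw [Nat.one_le_iff_ne_zero]
      intro h0
      obtain ⟨t, htc, htcov⟩ := coveringNumber_spec ⟨s, hsub⟩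
      rw [h0, Finset.card_eq_zero] at htc
      rcases hA with ⟨v, hv⟩
      have := htcov hv
      simp [htc] at this
    -- entropy bound
    have hHε : kolmogorovEntropy ε 𝓐 ≤ Real.logb 2 s₀.card + (n : ℝ) * H := by
      have h1 : kolmogorovEntropy ε 𝓐 ≤ Real.logb 2 ((s₀.card * N ^ n : ℕ) : ℝ) := by
        rw [kolmogorovEntropy]
        exact Real.logb_le_logb_of_le one_lt_two (by exact_mod_cast hcn1) (by exact_mod_cast hcn)
      have h2 : Real.logb 2 ((s₀.card * N ^ n : ℕ) : ℝ)
          = Real.logb 2 s₀.card + (n : ℝ) * H := by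
        have hs0 : ((s₀.card : ℝ)) ≠ 0 := by
          exact_mod_cast Nat.one_le_iff_ne_zero.mp hn₀
        have hN0 : ((N : ℝ)) ^ n ≠ 0 := by
          have : (N:ℝ) ≠ 0 := by exact_mod_cast Nat.one_le_iff_ne_zero.mp hN1
          positivity
        push_cast
        rw [Real.logb_mul hs0 hN0, Real.logb_pow]
      rw [h2] at h1
      exact h1
    -- final arithmetic
    rw [div_le_iff₀ hl0]
    have hBl : B ≤ l * (c - H) := by
      have h1 : B / (c - H) ≤ l := le_trans (le_trans (le_max_right _ _) hK) hKl
      exact (div_le_iff₀ hcH).mp h1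
    have hnH : (n : ℝ) * H ≤ (l + 1) * H := mul_le_mul_of_nonneg_right hnl hH0
    have e1 : l * (c - H) + l * H = c * l := by ring
    have e2 : (l + 1) * H = l * H + H := by ring
    linarith [hHε, hnH, hBl, e1, e2, hB_def]
  -- conclude via limsup
  have ev0 : ∀ᶠ ε in 𝓝[>] (0 : ℝ),
      0 ≤ kolmogorovEntropy ε 𝓐 / Real.logb 2 (1 / ε) := by
    filter_upwards [Ioo_mem_nhdsGT_of_mem (⟨le_refl 0, one_pos⟩ : (0:ℝ) ∈ Ico 0 1)] with ε hε
    obtain ⟨hε0, hε1⟩ := hε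
    have hl0 : 0 ≤ Real.logb 2 (1 / ε) :=
      Real.logb_nonneg one_lt_two (by rw [le_div_iff₀ hε0]; linarith)
    have hH0' : 0 ≤ kolmogorovEntropy ε 𝓐 := by
      rw [kolmogorovEntropy]
      rcases Nat.eq_zero_or_pos (coveringNumber ε 𝓐) with h | h
      · rw [h]; simp
      · exact Real.logb_nonneg one_lt_two (by exact_mod_cast h)
    positivity
  refine le_of_forall_gt_imp_ge_of_dense fun c hc => ?_
  exact Filter.limsup_le_of_le (isCoboundedUnder_le_of_eventually_le _ ev0) (ev c hc)
end

section
/- Let Φ and Φ₁ be Banach spaces with Φ₁ compactly embedded in Φ, let 𝓐 ⊆ Φ₁ be bounded with S(𝓐) = 𝓐, and suppose ‖S(u₁) − S(u₂)‖_{Φ₁} ≤ κ‖u₁ − u₂‖_{Φ₁} + L‖u₁ − u₂‖_Φ for all u₁, u₂ ∈ 𝓐, where 0 ≤ κ < 1 and L > 0. Then dim_f(𝓐, Φ₁) ≤ H_{(1−κ)/(4L)}(Φ₁ ↪ Φ) / log₂(2/(1+κ)), where H_ν(Φ₁ ↪ Φ) is the Kolmogorov ν-entropy of the unit ball of Φ₁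 in Φ. -/
open Set Filter Topology

lemma coveringNumber_le_card {X : Type*} [PseudoMetricSpace X] {ε : ℝ} {K : Set X}
    (t : Finset X) (h : K ⊆ ⋃ x ∈ t, Metric.ball x ε) : coveringNumber ε K ≤ t.card :=
  Nat.sInf_le ⟨t, rfl, h⟩

/-- Generalized squeezing theorem: if `Φ₁` is compactly embedded into `Φ` via `ι`,
`𝓐 ⊆ Φ₁` is bounded, `S(𝓐) = 𝓐` and
`‖S u₁ - S u₂‖_{Φ₁} ≤ κ ‖u₁ - u₂‖_{Φ₁} + L ‖u₁ - u₂‖_Φ` on `𝓐` with `0 ≤ κ < 1`, `L > 0`,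
then `dim_f(𝓐, Φ₁) ≤ H_{(1-κ)/(4L)}(Φ₁ ↪ Φ) / log₂(2/(1+κ))`. -/
theorem stmt_8 {Φ₁ Φ : Type*}
    [NormedAddCommGroup Φ₁] [NormedSpace ℝ Φ₁] [NormedAddCommGroup Φ] [NormedSpace ℝ Φ]
    (ι : Φ₁ →L[ℝ] Φ) (hinj : Function.Injective ι)
    (hcpt : IsCompact (closure (ι '' Metric.ball 0 1)))
    (𝓐 : Set Φ₁) (h𝓐 : Bornology.IsBounded 𝓐)
    (S : Φ₁ → Φ₁) (hinv : S '' 𝓐 = 𝓐)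
    (κ L : ℝ) (hκ0 : 0 ≤ κ) (hκ1 : κ < 1) (hL : 0 < L)
    (hsq : ∀ u₁ ∈ 𝓐, ∀ u₂ ∈ 𝓐,
      ‖S u₁ - S u₂‖ ≤ κ * ‖u₁ - u₂‖ + L * ‖ι u₁ - ι u₂‖) :
    fractalDim 𝓐 ≤
      kolmogorovEntropy ((1 - κ) / (4 * L)) (ι '' Metric.ball 0 1) /
        Real.logb 2 (2 / (1 + κ)) := by
  classical
  set ν : ℝ := (1 - κ) / (4 * L) with hνdef
  set θ : ℝ := (1 + κ) / 2 with hθdef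
  have hθ0 : 0 < θ := by rw [hθdef]; linarith
  have hθ1 : θ < 1 := by rw [hθdef]; linarith
  have hν0 : 0 < ν := by rw [hνdef]; apply div_pos <;> linarith
  set B : Set Φ := ι '' Metric.ball 0 1 with hBdef
  -- a finite cover of `B` by `ν`-balls exists
  have htb : TotallyBounded B := hcpt.totallyBounded.subset subset_closure
  obtain ⟨t₀, ht₀fin, ht₀cov⟩ := Metric.totallyBounded_iff.mp htb ν hν0
  have hsetne : {n : ℕ | ∃ t : Finset Φ, t.card = n ∧ B ⊆ ⋃ x ∈ t, Metric.ball x ν}.Nonempty := by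
    refine ⟨ht₀fin.toFinset.card, ht₀fin.toFinset, rfl, ?_⟩
    intro x hx
    obtain ⟨y, hy, hxy⟩ := Set.mem_iUnion₂.mp (ht₀cov hx)
    exact Set.mem_iUnion₂.2 ⟨y, ht₀fin.mem_toFinset.2 hy, hxy⟩
  set N : ℕ := coveringNumber ν B with hNdef
  obtain ⟨t, htcard, htcov⟩ : ∃ t : Finset Φ, t.card = N ∧ B ⊆ ⋃ x ∈ t, Metric.ball x ν :=
    Nat.sInf_mem hsetne
  have hN1 : 1 ≤ N := by
    rcases Nat.eq_zero_or_pos N with h0 | h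
    · exfalso
      have h0B : ι 0 ∈ B := ⟨0, Metric.mem_ball_self one_pos, rfl⟩
      obtain ⟨y, hy, -⟩ := Set.mem_iUnion₂.mp (htcov h0B)
      have : t = ∅ := Finset.card_eq_zero.mp (htcard.trans h0)
      simp [this] at hy
    · exact h
  -- a strict diameter bound for 𝓐
  obtain ⟨C, hC⟩ := Metric.isBounded_iff.mp h𝓐
  set D : ℝ := |C| + 1 with hDdef
  have hD0 : 0 < D := by positivity
  have hDdist : ∀ x ∈ 𝓐, ∀ y ∈ 𝓐, dist x y < D := by
    intro x hx y hy
    have h1 := hC hx hy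
    have h2 : C ≤ |C| := le_abs_self C
    rw [hDdef]; linarith
  -- the key covering induction
  have key : ∀ k : ℕ, ∃ f : (Fin k → {c // c ∈ t}) → Set Φ₁,
      (𝓐 ⊆ ⋃ σ, f σ) ∧ ∀ σ, f σ ⊆ 𝓐 ∧ ∀ x ∈ f σ, ∀ y ∈ f σ, dist x y < D * θ ^ k := by
    intro k
    induction k with
    | zero =>
      refine ⟨fun _ => 𝓐, fun x hx => Set.mem_iUnion.2 ⟨fun i => i.elim0, hx⟩,
        fun σ => ⟨subset_rfl, ?_⟩⟩
      intro x hx y hy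
      simpa using hDdist x hx y hy
    | succ k ih =>
      obtain ⟨f, hcov, hprop⟩ := ih
      set dk : ℝ := D * θ ^ k with hdk
      have hdk0 : 0 < dk := by positivity
      have hpick : ∀ τ : Fin k → {c // c ∈ t}, ∃ q : Φ₁, (f τ).Nonempty → q ∈ f τ := by
        intro τ
        by_cases h : (f τ).Nonempty
        · exact ⟨h.some, fun _ => h.some_mem⟩
        · exact ⟨0, fun h' => absurd h' h⟩
      choose p hp using hpick
      refine ⟨fun σ => S '' {v ∈ f (fun i => σ i.succ) |
          ‖ι v - ι (p (fun i => σ i.succ)) - dk • ((σ 0 : {c // c ∈ t}) : Φ)‖ < ν * dk}, ?_, ?_⟩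
      · -- covering property
        intro x hx
        rw [← hinv] at hx
        obtain ⟨v, hv𝓐, rfl⟩ := hx
        obtain ⟨τ, hvτ⟩ := Set.mem_iUnion.mp (hcov hv𝓐)
        have hfne : (f τ).Nonempty := ⟨v, hvτ⟩
        have hpτ := hp τ hfne
        have hvp : ‖v - p τ‖ < dk := by
          have := (hprop τ).2 v hvτ (p τ) hpτ
          rwa [dist_eq_norm] at this
        have hw : ι (dk⁻¹ • (v - p τ)) ∈ B := by
          refine ⟨dk⁻¹ • (v - p τ), ?_, rfl⟩
          rw [Metric.mem_ball, dist_zero_right, norm_smul, norm_inv, Real.norm_of_nonneg hdk0.le]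
          rw [inv_mul_lt_iff₀ hdk0, mul_one]
          exact hvp
        obtain ⟨c, hct, hc⟩ := Set.mem_iUnion₂.mp (htcov hw)
        rw [Metric.mem_ball, dist_eq_norm] at hc
        have hιw : ι (dk⁻¹ • (v - p τ)) = dk⁻¹ • (ι v - ι (p τ)) := by
          rw [map_smul, map_sub]
        refine Set.mem_iUnion.2 ⟨Fin.cons (α := fun _ => {c // c ∈ t}) ⟨c, hct⟩ τ, ?_⟩
        have htail : (fun i : Fin k => (Fin.cons (α := fun _ => {c // c ∈ t}) ⟨c, hct⟩ τ) i.succ) = τ := by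
          funext i; simp
        refine ⟨v, ?_, rfl⟩
        simp only [htail, Fin.cons_zero]
        refine ⟨hvτ, ?_⟩
        have hkey : ι v - ι (p τ) - dk • c = dk • (dk⁻¹ • (ι v - ι (p τ)) - c) := by
          rw [smul_sub, smul_inv_smul₀ hdk0.ne']
        rw [hkey, norm_smul, Real.norm_of_nonneg hdk0.le]
        rw [hιw] at hc
        calc dk * ‖dk⁻¹ • (ι v - ι (p τ)) - c‖ < dk * ν := by
              exact (mul_lt_mul_iff_right₀ hdk0).mpr hc
          _ = ν * dk := mul_comm _ _
      · -- diameter and inclusion properties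
        intro σ
        constructor
        · rintro x ⟨v, ⟨hv, -⟩, rfl⟩
          rw [← hinv]
          exact ⟨v, (hprop _).1 hv, rfl⟩
        · rintro x ⟨v, ⟨hvf, hvb⟩, rfl⟩ y ⟨w, ⟨hwf, hwb⟩, rfl⟩
          have hv𝓐 := (hprop _).1 hvf
          have hw𝓐 := (hprop _).1 hwf
          have h1 : ‖v - w‖ < dk := by
            have := (hprop _).2 v hvf w hwf
            rwa [dist_eq_norm] at this
          have h2 : ‖ι v - ι w‖ < 2 * (ν * dk) := by
            have hsplit : ι v - ι w =
                (ι v - ι (p fun i => σ i.succ) - dk • ((σ 0 : {c // c ∈ t}) : Φ)) -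
                (ι w - ι (p fun i => σ i.succ) - dk • ((σ 0 : {c // c ∈ t}) : Φ)) := by abel
            calc ‖ι v - ι w‖ ≤ _ + _ := by rw [hsplit]; exact norm_sub_le _ _
              _ < ν * dk + ν * dk := add_lt_add hvb hwb
              _ = 2 * (ν * dk) := by ring
          rw [dist_eq_norm]
          calc ‖S v - S w‖ ≤ κ * ‖v - w‖ + L * ‖ι v - ι w‖ := hsq v hv𝓐 w hw𝓐
            _ < κ * dk + L * (2 * (ν * dk)) := by
                refine add_lt_add_of_le_of_lt ?_ ?_
                · exact mul_le_mul_of_nonneg_left h1.le hκ0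
                · exact (mul_lt_mul_iff_right₀ hL).mpr h2
            _ = D * θ ^ (k + 1) := by
                rw [hdk, hνdef, hθdef]
                field_simp
                ring
  -- covering number bounds for 𝓐
  have hcovN : ∀ ε : ℝ, ∀ k : ℕ, D * θ ^ k ≤ ε → coveringNumber ε 𝓐 ≤ N ^ k := by
    intro ε k hε
    obtain ⟨f, hcov, hprop⟩ := key k
    have hpick : ∀ σ : Fin k → {c // c ∈ t}, ∃ q : Φ₁, (f σ).Nonempty → q ∈ f σ := by
      intro σ
      by_cases h : (f σ).Nonempty
      · exact ⟨h.some, fun _ => h.some_mem⟩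
      · exact ⟨0, fun h' => absurd h' h⟩
    choose q hq using hpick
    set T : Finset Φ₁ := Finset.image q (Finset.univ.filter fun σ => (f σ).Nonempty) with hT
    have hTcov : 𝓐 ⊆ ⋃ x ∈ T, Metric.ball x ε := by
      intro x hx
      obtain ⟨σ, hσ⟩ := Set.mem_iUnion.mp (hcov hx)
      have hne : (f σ).Nonempty := ⟨x, hσ⟩
      refine Set.mem_iUnion₂.2 ⟨q σ, ?_, ?_⟩
      · exact Finset.mem_image.2 ⟨σ, Finset.mem_filter.2 ⟨Finset.mem_univ _, hne⟩, rfl⟩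
      · exact Metric.mem_ball.2 (lt_of_lt_of_le ((hprop σ).2 x hσ (q σ) (hq σ hne)) hε)
    calc coveringNumber ε 𝓐 ≤ T.card := coveringNumber_le_card T hTcov
      _ ≤ (Finset.univ.filter fun σ => (f σ).Nonempty).card := Finset.card_image_le
      _ ≤ (Finset.univ : Finset (Fin k → {c // c ∈ t})).card := Finset.card_filter_le _ _
      _ = N ^ k := by
          rw [Finset.card_univ, Fintype.card_fun, Fintype.card_coe, Fintype.card_fin, htcard]
  have hm0 : 0 ≤ Real.logb 2 N := Real.logb_nonneg one_lt_two (by exact_mod_cast hN1)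
  -- entropy bounds for 𝓐
  have hent : ∀ ε : ℝ, ∀ k : ℕ, D * θ ^ k ≤ ε → kolmogorovEntropy ε 𝓐 ≤ k * Real.logb 2 N := by
    intro ε k hε
    have h1 := hcovN ε k hε
    show Real.logb 2 (coveringNumber ε 𝓐) ≤ k * Real.logb 2 N
    rcases Nat.eq_zero_or_pos (coveringNumber ε 𝓐) with h0 | hpos
    · rw [h0]
      simp only [Nat.cast_zero, Real.logb_zero]
      exact mul_nonneg (Nat.cast_nonneg k) hm0
    · calc Real.logb 2 (coveringNumber ε 𝓐) ≤ Real.logb 2 ((N : ℝ) ^ k) := by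
            refine Real.logb_le_logb_of_le one_lt_two (by exact_mod_cast hpos) ?_
            exact_mod_cast h1
        _ = k * Real.logb 2 N := Real.logb_pow 2 _ k
  -- abbreviations for the limit computation
  set m : ℝ := Real.logb 2 N with hmdef
  set c : ℝ := Real.logb 2 (1 / θ) with hcdef
  have h1θ : 1 < 1 / θ := by rw [lt_div_iff₀ hθ0, one_mul]; exact hθ1
  have hc0 : 0 < c := Real.logb_pos one_lt_two h1θ
  have hlogθ : 0 < Real.log (1 / θ) := Real.log_pos h1θ
  have hlog2 : 0 < Real.log 2 := Real.log_pos one_lt_two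
  set u : ℝ → ℝ := fun ε => kolmogorovEntropy ε 𝓐 / Real.logb 2 (1 / ε) with hudef
  set v : ℝ → ℝ := fun ε => (Real.logb (1 / θ) (D / ε) + 1) * m / Real.logb 2 (1 / ε) with hvdef
  set w : ℝ → ℝ := fun ε =>
    (m / c) * (Real.log D / Real.log (1 / ε)) + m / c + m / Real.logb 2 (1 / ε) with hwdef
  have hmem : Set.Ioo (0 : ℝ) (min D 1) ∈ 𝓝[>] (0 : ℝ) :=
    Ioo_mem_nhdsGT_of_mem ⟨le_refl 0, lt_min hD0 one_pos⟩
  -- eventual bound u ≤ v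
  have hub : ∀ᶠ ε in 𝓝[>] (0 : ℝ), u ε ≤ v ε := by
    filter_upwards [hmem] with ε hε
    obtain ⟨hε0, hεm⟩ := hε
    have hεD : ε < D := lt_of_lt_of_le hεm (min_le_left _ _)
    have hε1 : ε < 1 := lt_of_lt_of_le hεm (min_le_right _ _)
    have hOne : 1 < 1 / ε := by rw [lt_div_iff₀ hε0, one_mul]; exact hε1
    have hℓ : 0 < Real.logb 2 (1 / ε) := Real.logb_pos one_lt_two hOne
    have hDε : 1 < D / ε := by rw [lt_div_iff₀ hε0, one_mul]; exact hεD
    set x : ℝ := Real.logb (1 / θ) (D / ε) with hxdef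
    have hx0 : 0 ≤ x := Real.logb_nonneg h1θ hDε.le
    set k : ℕ := ⌊x⌋₊ + 1 with hkdef
    have hxk : x ≤ (k : ℕ) := by
      rw [hkdef]
      push_cast
      exact (Nat.lt_floor_add_one x).le
    have hkx : (k : ℝ) ≤ x + 1 := by
      rw [hkdef]
      push_cast
      exact add_le_add_left (Nat.floor_le hx0) 1
    have hθx : θ ^ (x : ℝ) = ε / D := by
      have h1 : (1 / θ) ^ (x : ℝ) = D / ε :=
        Real.rpow_logb (by positivity) (ne_of_gt h1θ) (by positivity)
      have h2 : (1 / θ) ^ (x : ℝ) = (θ ^ (x : ℝ))⁻¹ := by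
        rw [one_div, Real.inv_rpow hθ0.le]
      rw [h2] at h1
      rw [← inv_inv (θ ^ (x:ℝ)), h1, inv_div]
    have hθk : D * θ ^ k ≤ ε := by
      have h3 : θ ^ (k : ℕ) = θ ^ ((k : ℕ) : ℝ) := (Real.rpow_natCast θ k).symm
      have h4 : θ ^ ((k : ℕ) : ℝ) ≤ θ ^ (x : ℝ) :=
        Real.rpow_le_rpow_of_exponent_ge hθ0 hθ1.le hxk
      rw [h3]
      calc D * θ ^ ((k : ℕ) : ℝ) ≤ D * (ε / D) := by
            rw [← hθx]; exact mul_le_mul_of_nonneg_left h4 hD0.le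
        _ = ε := by field_simp
    have hu1 : u ε ≤ (k : ℝ) * m / Real.logb 2 (1 / ε) :=
      (div_le_div_iff_of_pos_right hℓ).mpr (hent ε k hθk)
    have hu2 : (k : ℝ) * m / Real.logb 2 (1 / ε) ≤ (x + 1) * m / Real.logb 2 (1 / ε) := by
      refine (div_le_div_iff_of_pos_right hℓ).mpr ?_
      exact mul_le_mul_of_nonneg_right hkx hm0
    exact hu1.trans hu2
  -- v agrees with w near 0
  have hlogθne : Real.log θ ≠ 0 := (Real.log_neg hθ0 hθ1).ne
  have hvw : v =ᶠ[𝓝[>] (0 : ℝ)] w := by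
    clear_value θ ν
    filter_upwards [hmem] with ε hε
    obtain ⟨hε0, hεm⟩ := hε
    have hε1 : ε < 1 := lt_of_lt_of_le hεm (min_le_right _ _)
    have hlogε : Real.log ε ≠ 0 := (Real.log_neg hε0 hε1).ne
    rw [hvdef, hwdef, hcdef]
    simp only [Real.logb, Real.log_div hD0.ne' hε0.ne', one_div, Real.log_inv]
    field_simp [hlogθne, hlog2.ne', hlogε]
    ring
  -- the limit of w
  have htop : Tendsto (fun ε : ℝ => Real.log (1 / ε)) (𝓝[>] (0 : ℝ)) atTop := by
    have h1 : Tendsto (fun ε : ℝ => -Real.log ε) (𝓝[>] (0 : ℝ)) atTop :=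
      tendsto_neg_atBot_atTop.comp Real.tendsto_log_nhdsGT_zero
    refine h1.congr fun ε => ?_
    rw [one_div, Real.log_inv]
  have htop2 : Tendsto (fun ε : ℝ => Real.logb 2 (1 / ε)) (𝓝[>] (0 : ℝ)) atTop := by
    have h2 := htop.atTop_div_const hlog2
    refine h2.congr fun ε => ?_
    rw [Real.logb]
  have hw0 : Tendsto w (𝓝[>] (0 : ℝ)) (𝓝 (m / c)) := by
    rw [hwdef]
    have T1 : Tendsto (fun ε : ℝ => Real.log D / Real.log (1 / ε)) (𝓝[>] (0 : ℝ)) (𝓝 0) :=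
      tendsto_const_nhds.div_atTop htop
    have T2 : Tendsto (fun ε : ℝ => m / Real.logb 2 (1 / ε)) (𝓝[>] (0 : ℝ)) (𝓝 0) :=
      tendsto_const_nhds.div_atTop htop2
    have := ((T1.const_mul (m / c)).add_const (m / c)).add T2
    simpa using this
  have hv0 : Tendsto v (𝓝[>] (0 : ℝ)) (𝓝 (m / c)) := Filter.Tendsto.congr' hvw.symm hw0
  -- nonnegativity of u for coboundedness
  have hu0 : ∀ᶠ ε in 𝓝[>] (0 : ℝ), (0 : ℝ) ≤ u ε := by
    filter_upwards [hmem] with ε hε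
    obtain ⟨hε0, hεm⟩ := hε
    have hε1 : ε < 1 := lt_of_lt_of_le hεm (min_le_right _ _)
    have hOne : 1 < 1 / ε := by rw [lt_div_iff₀ hε0, one_mul]; exact hε1
    have hℓ : 0 < Real.logb 2 (1 / ε) := Real.logb_pos one_lt_two hOne
    rw [hudef]
    refine div_nonneg ?_ hℓ.le
    show (0 : ℝ) ≤ Real.logb 2 (coveringNumber ε 𝓐)
    rcases Nat.eq_zero_or_pos (coveringNumber ε 𝓐) with h0 | hpos
    · rw [h0]; simp
    · exact Real.logb_nonneg one_lt_two (by exact_mod_cast hpos)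
  have hco : IsCoboundedUnder (· ≤ ·) (𝓝[>] (0 : ℝ)) u :=
    isCoboundedUnder_le_of_eventually_le _ hu0
  have hbd : IsBoundedUnder (· ≤ ·) (𝓝[>] (0 : ℝ)) v := hv0.isBoundedUnder_le
  have hfinal : fractalDim 𝓐 ≤ m / c := by
    have h1 : Filter.limsup u (𝓝[>] (0 : ℝ)) ≤ Filter.limsup v (𝓝[>] (0 : ℝ)) :=
      limsup_le_limsup hub hco hbd
    have h2 : Filter.limsup v (𝓝[>] (0 : ℝ)) = m / c := hv0.limsup_eq
    have h0 : fractalDim 𝓐 = Filter.limsup u (𝓝[>] (0 : ℝ)) := by rw [hudef]; rfl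
    rw [h0]
    exact h1.trans_eq h2
  have hgoal : kolmogorovEntropy ν B / Real.logb 2 (2 / (1 + κ)) = m / c := by
    have h2 : (2 : ℝ) / (1 + κ) = 1 / θ := by rw [hθdef, one_div_div]
    rw [h2, hmdef, hcdef]
    unfold kolmogorovEntropy
    rw [← hNdef]
  rw [hgoal]
  exact hfinal
end

section
/- Hölder continuity of attractors with uniform exponential attraction: let Φ and 𝔄 be subsets of normed spaces, and let S_α(t):Φ→Φ, α ∈ 𝔄, be a family of semigroups satisfying ‖S_{α₁}(t)u₀ − S_{α₂}(t)u₀‖_Φ ≤ C‖α₁ − α₂‖ e^{Kt} for all u₀ ∈ Φ, t ≥ 0. Suppose each S_α(t) has a global attractor 𝓐_α (with respect to all subsets of Φ) satisfying the uniform exponential attraction dist_Φ(S_α(t)Φ, 𝓐_α) ≤ Q e^{−λ t} with Q, λ > 0 independent of α. Then for all α₁, α₂ ∈ 𝔄: dist^{sym}_Φ(𝓐_{α₁}, 𝓐_{α₂}) ≤ (Q + C) ‖α₁ − α₂‖^{λ/(K+λ)}. -/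
open Set Filter Topology Metric

/-- Hölder continuity of global attractors under uniform exponential attraction: given a
family of semigroups `S α t` on a subset `Φ` of a normed space, depending Lipschitz
continuously (with rate `C e^{Kt}`) on the parameter `α` ranging in a subset `𝔄` of a
normed space, each possessing a global attractor `𝓐 α ⊆ Φ` (compact, strictly invariant,
attracting all of `Φ`) with the uniform exponential attraction
`dist(S α t Φ, 𝓐 α) ≤ Q e^{-λ t}`, the attractors are uniformly Hölder continuous in `α`:
`dist_sym(𝓐 α₁, 𝓐 α₂) ≤ (Q + C) ‖α₁ - α₂‖^{λ/(K+λ)}`. -/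
theorem stmt_10 {X P : Type*}
    [NormedAddCommGroup X] [NormedSpace ℝ X] [NormedAddCommGroup P] [NormedSpace ℝ P]
    (Φ : Set X) (𝔄 : Set P)
    (S : P → ℝ → X → X)
    (hS0 : ∀ α ∈ 𝔄, ∀ u ∈ Φ, S α 0 u = u)
    (hSadd : ∀ α ∈ 𝔄, ∀ t s : ℝ, 0 ≤ t → 0 ≤ s → ∀ u ∈ Φ, S α (t + s) u = S α t (S α s u))
    (hSmap : ∀ α ∈ 𝔄, ∀ t : ℝ, 0 ≤ t → S α t '' Φ ⊆ Φ)
    (C K : ℝ) (hC : 0 < C) (hK : 0 < K)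
    (hlip : ∀ α₁ ∈ 𝔄, ∀ α₂ ∈ 𝔄, ∀ t : ℝ, 0 ≤ t → ∀ u ∈ Φ,
      ‖S α₁ t u - S α₂ t u‖ ≤ C * ‖α₁ - α₂‖ * Real.exp (K * t))
    (𝓐 : P → Set X)
    (h𝓐sub : ∀ α ∈ 𝔄, 𝓐 α ⊆ Φ)
    (h𝓐c : ∀ α ∈ 𝔄, IsCompact (𝓐 α))
    (h𝓐inv : ∀ α ∈ 𝔄, ∀ t : ℝ, 0 ≤ t → S α t '' 𝓐 α = 𝓐 α)
    (Q lam : ℝ) (hQ : 0 < Q) (hlam : 0 < lam)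
    (hexp : ∀ α ∈ 𝔄, ∀ t : ℝ, 0 ≤ t → ∀ x ∈ S α t '' Φ,
      infDist x (𝓐 α) ≤ Q * Real.exp (-lam * t)) :
    ∀ α₁ ∈ 𝔄, ∀ α₂ ∈ 𝔄,
      (∀ x ∈ 𝓐 α₁, infDist x (𝓐 α₂) ≤ (Q + C) * ‖α₁ - α₂‖ ^ (lam / (K + lam))) ∧
      (∀ x ∈ 𝓐 α₂, infDist x (𝓐 α₁) ≤ (Q + C) * ‖α₁ - α₂‖ ^ (lam / (K + lam))) := by

  have hKl : 0 < K + lam := by linarith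
  have hp0 : 0 ≤ lam / (K + lam) := by positivity
  have key : ∀ α ∈ 𝔄, ∀ β ∈ 𝔄, ∀ x ∈ 𝓐 α,
      infDist x (𝓐 β) ≤ (Q + C) * ‖α - β‖ ^ (lam / (K + lam)) := by
    intro α hα β hβ x hx
    set ε := ‖α - β‖ with hε
    set p := lam / (K + lam) with hpdef
    rcases eq_or_lt_of_le (norm_nonneg (α - β)) with h0 | hεpos
    · -- ε = 0, so α = β
      have : α = β := norm_sub_eq_zero_iff.mp h0.symm
      subst this
      rw [infDist_zero_of_mem hx]
      positivity
    · have hxΦ : x ∈ Φ := h𝓐sub α hα hx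
      rcases le_or_gt 1 ε with h1 | h1
      · -- ε ≥ 1 : use t = 0
        have hmem : x ∈ S β 0 '' Φ := ⟨x, hxΦ, hS0 β hβ x hxΦ⟩
        have := hexp β hβ 0 le_rfl x hmem
        simp only [mul_zero, Real.exp_zero, mul_one] at this
        have hεp : (1:ℝ) ≤ ε ^ p := Real.one_le_rpow h1 hp0
        nlinarith [Real.rpow_nonneg (norm_nonneg (α - β)) p]
      · -- 0 < ε < 1
        set T : ℝ := -Real.log ε / (K + lam) with hT
        have hlog : Real.log ε < 0 := Real.log_neg hεpos h1
        have hT0 : 0 ≤ T := by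
          apply div_nonneg _ hKl.le; linarith
        obtain ⟨y, hy, hxy⟩ : ∃ y ∈ 𝓐 α, S α T y = x := by
          have := h𝓐inv α hα T hT0
          rw [← this] at hx
          exact hx
        have hyΦ : y ∈ Φ := h𝓐sub α hα hy
        have hlipb := hlip α hα β hβ T hT0 y hyΦ
        have hexpb := hexp β hβ T hT0 (S β T y) ⟨y, hyΦ, rfl⟩
        have htri : infDist x (𝓐 β) ≤ infDist (S β T y) (𝓐 β) + dist x (S β T y) :=
          infDist_le_infDist_add_dist
        have hdist : dist x (S β T y) = ‖S α T y - S β T y‖ := by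
          rw [← hxy, dist_eq_norm]
        have heK : Real.exp (K * T) = ε ^ (-(K / (K + lam))) := by
          rw [Real.rpow_def_of_pos hεpos, hT]
          congr 1
          ring
        have heL : Real.exp (-lam * T) = ε ^ p := by
          rw [Real.rpow_def_of_pos hεpos, hT, hpdef]
          congr 1
          ring
        have hmul : ε * ε ^ (-(K / (K + lam))) = ε ^ p := by
          have hps : p = 1 + -(K / (K + lam)) := by
            rw [hpdef]; field_simp; ring
          rw [hps, Real.rpow_add hεpos, Real.rpow_one]
        have hC1 : C * ε * Real.exp (K * T) = C * ε ^ p := by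
          rw [heK, mul_assoc, hmul]
        have hQ1 : Q * Real.exp (-lam * T) = Q * ε ^ p := by rw [heL]
        calc infDist x (𝓐 β) ≤ infDist (S β T y) (𝓐 β) + dist x (S β T y) := htri
          _ ≤ Q * ε ^ p + C * ε ^ p := by
              rw [hdist]
              have := hlipb
              rw [hC1] at this
              rw [hQ1] at hexpb
              linarith
          _ = (Q + C) * ε ^ p := by ring
  intro α₁ h1 α₂ h2
  refine ⟨fun x hx => key α₁ h1 α₂ h2 x hx, fun x hx => ?_⟩
  have := key α₂ h2 α₁ h1 x hx
  rwa [norm_sub_rev] at this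
end

section
/- Uniqueness of equilibrium for the Ginzburg–Landau problem with boundary value 1: let ν > 0 and let u ∈ C²([−1,1]) satisfy ν² u″ = u³ − u on (−1,1) with u(−1) = u(1) = 1. Then u ≡ 1. -/
open Set Filter Topology

private lemma sqrt_le_aux {a b : ℝ} (_ha : 0 ≤ a) (hb : 0 ≤ b) (h : a ^ 2 ≤ b ^ 2) : a ≤ b := by
  nlinarith

/-- Uniqueness of the equilibrium for the Ginzburg–Landau problem with boundary value 1:
if `ν > 0` and `u ∈ C²([-1,1])` satisfies `ν² u'' = u³ - u` on `(-1,1)` with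
`u(-1) = u(1) = 1`, then `u ≡ 1` on `[-1,1]`. -/
theorem stmt_15 (ν : ℝ) (hν : 0 < ν)
    (u : ℝ → ℝ)
    (hu : ContDiffOn ℝ 2 u (Set.Icc (-1 : ℝ) 1))
    (heq : ∀ x ∈ Set.Ioo (-1 : ℝ) 1, ν ^ 2 * deriv (deriv u) x = (u x) ^ 3 - u x)
    (hbc₁ : u (-1) = 1) (hbc₂ : u 1 = 1) :
    ∀ x ∈ Set.Icc (-1 : ℝ) 1, u x = 1 := by
  have huIoo : ContDiffOn ℝ 2 u (Set.Ioo (-1 : ℝ) 1) := hu.mono Set.Ioo_subset_Icc_self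
  -- first and second derivatives
  have hd1 : ∀ x ∈ Set.Ioo (-1 : ℝ) 1, HasDerivAt u (deriv u x) x := by
    intro x hx
    exact ((huIoo.differentiableOn (by norm_num)).differentiableAt
      (isOpen_Ioo.mem_nhds hx)).hasDerivAt
  have hd2 : ∀ x ∈ Set.Ioo (-1 : ℝ) 1, HasDerivAt (deriv u) (deriv (deriv u) x) x := by
    intro x hx
    have h1 : ContDiffOn ℝ 1 (deriv u) (Set.Ioo (-1 : ℝ) 1) :=
      huIoo.deriv_of_isOpen isOpen_Ioo (by norm_num)
    exact ((h1.differentiableOn (by norm_num)).differentiableAt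
      (isOpen_Ioo.mem_nhds hx)).hasDerivAt
  -- energy
  set E : ℝ → ℝ := fun x => ν ^ 2 * (deriv u x) ^ 2 - ((u x) ^ 2 - 1) ^ 2 / 2 with hE
  have hEderiv : ∀ x ∈ Set.Ioo (-1 : ℝ) 1, HasDerivAt E 0 x := by
    intro x hx
    have hA : HasDerivAt (fun y => ν ^ 2 * (deriv u y) ^ 2)
        (ν ^ 2 * (2 * deriv u x ^ 1 * deriv (deriv u) x)) x :=
      ((hd2 x hx).pow 2).const_mul _
    have hB : HasDerivAt (fun y => ((u y) ^ 2 - 1) ^ 2 / 2)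
        ((2 * ((u x) ^ 2 - 1) ^ 1 * (2 * u x ^ 1 * deriv u x)) / 2) x :=
      ((((hd1 x hx).pow 2).sub_const 1).pow 2).div_const 2
    have := hA.sub hB
    refine this.congr_deriv ?_
    have h := heq x hx
    linear_combination (2 * deriv u x) * h
  -- Rolle
  obtain ⟨c, hc, hc0⟩ : ∃ c ∈ Set.Ioo (-1 : ℝ) 1, deriv u c = 0 :=
    exists_deriv_eq_zero (by norm_num) hu.continuousOn (hbc₁.trans hbc₂.symm)
  -- energy is constant on the open interval
  have hEconst : ∀ x ∈ Set.Ioo (-1 : ℝ) 1, E x = E c := by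
    intro x hx
    refine (convex_Ioo (-1 : ℝ) 1).is_const_of_fderivWithin_eq_zero
      (fun y hy => ((hEderiv y hy).differentiableAt).differentiableWithinAt)
      (fun y hy => ?_) hx hc
    have h := ((hEderiv y hy).hasFDerivAt.hasFDerivWithinAt).fderivWithin
      (isOpen_Ioo.uniqueDiffOn y hy)
    rw [h]; ext; simp
  -- hence E ≤ 0 on the open interval
  have hEle : ∀ x ∈ Set.Ioo (-1 : ℝ) 1, ν ^ 2 * (deriv u x) ^ 2 ≤ ((u x) ^ 2 - 1) ^ 2 / 2 := by
    intro x hx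
    have h1 := hEconst x hx
    simp only [hE] at h1
    rw [hc0] at h1
    nlinarith [sq_nonneg ((u c) ^ 2 - 1)]
  -- bound on |u + 1|
  obtain ⟨B, hB⟩ : ∃ B, ∀ x ∈ Set.Icc (-1 : ℝ) 1, ‖u x + 1‖ ≤ B :=
    isCompact_Icc.exists_bound_of_continuousOn (hu.continuousOn.add continuousOn_const)
  have hB2 : (2 : ℝ) ≤ B := by
    have h := hB (-1) (by norm_num)
    rw [hbc₁] at h
    norm_num [Real.norm_eq_abs] at h
    linarith
  set K : ℝ := B / ν with hK
  have hKpos : 0 < K := by positivity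
  -- key derivative bound
  have hkey : ∀ x ∈ Set.Ioo (-1 : ℝ) 1, ‖deriv u x‖ ≤ K * ‖u x - 1‖ + 0 := by
    intro x hx
    have h1 := hEle x hx
    have h2 := hB x (Set.Ioo_subset_Icc_self hx)
    rw [Real.norm_eq_abs] at h2 ⊢
    rw [Real.norm_eq_abs, add_zero]
    have h3 : ν * |deriv u x| ≤ B * |u x - 1| := by
      apply sqrt_le_aux (by positivity) (by positivity)
      have e1 : (ν * |deriv u x|) ^ 2 = ν ^ 2 * (deriv u x) ^ 2 := by
        rw [mul_pow, sq_abs]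
      have e2 : (B * |u x - 1|) ^ 2 = B ^ 2 * (u x - 1) ^ 2 := by
        rw [mul_pow, sq_abs]
      rw [e1, e2]
      have e3 : ((u x) ^ 2 - 1) ^ 2 = (u x + 1) ^ 2 * (u x - 1) ^ 2 := by ring
      have e4 : (u x + 1) ^ 2 ≤ B ^ 2 := by
        have := sq_abs (u x + 1)
        nlinarith [abs_nonneg (u x + 1)]
      nlinarith [sq_nonneg (u x - 1), sq_nonneg (u x + 1)]
    calc |deriv u x| = (ν * |deriv u x|) / ν := by field_simp
      _ ≤ (B * |u x - 1|) / ν := by gcongr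
      _ = K * |u x - 1| := by rw [hK]; ring
  -- conclusion via Grönwall
  intro x0 hx0
  rcases eq_or_lt_of_le hx0.1 with h | h
  · rw [← h]; exact hbc₁
  -- x0 > -1
  have habs : ∀ ε > 0, |u x0 - 1| ≤ ε := by
    intro ε hε
    set δ : ℝ := ε / Real.exp (K * 2) with hδ
    have hδpos : 0 < δ := by positivity
    -- find a near -1 with |u a - 1| < δ
    have hcont : ContinuousWithinAt u (Set.Icc (-1 : ℝ) 1) (-1) :=
      hu.continuousOn (-1) (by norm_num)
    have h1 : ∀ᶠ x in 𝓝[Set.Icc (-1 : ℝ) 1] (-1), |u x - 1| < δ := by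
      have := Metric.tendsto_nhds.mp hcont δ hδpos
      filter_upwards [this] with x hx
      rwa [hbc₁, Real.dist_eq] at hx
    have hsub : Set.Ioo (-1 : ℝ) x0 ⊆ Set.Icc (-1 : ℝ) 1 := fun y hy =>
      ⟨le_of_lt hy.1, le_of_lt (lt_of_lt_of_le hy.2 hx0.2)⟩
    have h2 : ∀ᶠ x in 𝓝[Set.Ioo (-1 : ℝ) x0] (-1), |u x - 1| < δ :=
      h1.filter_mono (nhdsWithin_mono _ hsub)
    have hne : (𝓝[Set.Ioo (-1 : ℝ) x0] (-1)).NeBot := by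
      rw [← mem_closure_iff_nhdsWithin_neBot, closure_Ioo (ne_of_lt h)]
      exact ⟨le_rfl, le_of_lt h⟩
    obtain ⟨a, haδ, ha⟩ := (h2.and (eventually_mem_nhdsWithin)).exists
    -- Grönwall on [a, x0]
    have hIcc_sub : Set.Icc a x0 ⊆ Set.Icc (-1 : ℝ) 1 :=
      Set.Icc_subset_Icc (le_of_lt ha.1) hx0.2
    have hIco_sub : Set.Ico a x0 ⊆ Set.Ioo (-1 : ℝ) 1 := fun y hy =>
      ⟨lt_of_lt_of_le ha.1 hy.1, lt_of_lt_of_le hy.2 hx0.2⟩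
    have hgron := norm_le_gronwallBound_of_norm_deriv_right_le
      (f := fun y => u y - 1) (f' := deriv u) (a := a) (b := x0) (δ := δ) (K := K) (ε := 0)
      ((hu.continuousOn.mono hIcc_sub).sub continuousOn_const)
      (fun y hy => (((hd1 y (hIco_sub hy)).sub_const 1).hasDerivWithinAt))
      (le_of_lt haδ)
      (fun y hy => hkey y (hIco_sub hy))
    have hx0mem : x0 ∈ Set.Icc a x0 := ⟨le_of_lt ha.2, le_rfl⟩
    have := hgron x0 hx0mem
    rw [gronwallBound_ε0] at this
    calc |u x0 - 1| = ‖u x0 - 1‖ := (Real.norm_eq_abs _).symm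
      _ ≤ δ * Real.exp (K * (x0 - a)) := this
      _ ≤ δ * Real.exp (K * 2) := by
          apply mul_le_mul_of_nonneg_left _ (le_of_lt hδpos)
          apply Real.exp_le_exp.mpr
          apply mul_le_mul_of_nonneg_left _ (le_of_lt hKpos)
          nlinarith [ha.1, hx0.2]
      _ = ε := by rw [hδ]; field_simp
  by_contra hne
  have hpos : 0 < |u x0 - 1| := abs_pos.mpr (sub_ne_zero.mpr hne)
  have := habs (|u x0 - 1| / 2) (by linarith)
  linarith
end

section
/- Backward uniqueness separation for 1D parabolic equations on a subinterval: let L > 0, ν > 0, x₀ ∈ (0,π) with ν(π/x₀)² > L, and let v : ℝ × [0,x₀] → ℝ be a bounded (in L²(0,x₀), uniformly in t ∈ ℝ) classical solution of ∂_t v = ν ∂_x² v − l(t,x)v with v(t,0) = v(t,x₀) = 0 for all t, where ‖l(t,·)‖_{C[0,x₀]} ≤ L for all t. Then v ≡ 0. -/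
open Set Filter Topology Real intervalIntegral
open MeasureTheory

private lemma tendsto_sin_div_self' : Tendsto (fun y : ℝ => Real.sin y / y) (𝓝[≠] (0:ℝ)) (𝓝 1) := by
  have h := Real.hasDerivAt_sin 0
  rw [hasDerivAt_iff_tendsto_slope] at h
  simp only [Real.cos_zero] at h
  refine h.congr (fun y => ?_)
  simp [slope_def_field]

lemma wirtinger_aux {a : ℝ} (ha : 0 < a) (u u' : ℝ → ℝ)
    (hu : ∀ x, HasDerivAt u (u' x) x) (hu' : Continuous u')
    (h0 : u 0 = 0) (hA : u a = 0) :
    (Real.pi / a) ^ 2 * ∫ x in (0:ℝ)..a, u x ^ 2 ≤ ∫ x in (0:ℝ)..a, u' x ^ 2 := by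
  set k : ℝ := Real.pi / a with hk_def
  have hk : 0 < k := div_pos Real.pi_pos ha
  have hka : k * a = Real.pi := div_mul_cancel₀ _ ha.ne'
  have hu_cont : Continuous u := continuous_iff_continuousAt.mpr fun x => (hu x).continuousAt
  set c : ℝ → ℝ := fun x => k * Real.cos (k * x) / Real.sin (k * x) with hc_def
  set F : ℝ → ℝ := fun x => u x ^ 2 * c x with hF_def
  set f : ℝ → ℝ := fun x => u' x ^ 2 - k ^ 2 * u x ^ 2 with hf_def
  have hf_cont : Continuous f := (hu'.pow 2).sub (continuous_const.mul (hu_cont.pow 2))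
  have hsin : ∀ x ∈ Ioo (0:ℝ) a, 0 < Real.sin (k * x) := by
    intro x hx
    apply Real.sin_pos_of_pos_of_lt_pi (mul_pos hk hx.1)
    calc k * x < k * a := by nlinarith [hx.2]
      _ = Real.pi := hka
  -- pointwise derivative of F on (0,a)
  have hF : ∀ x ∈ Ioo (0:ℝ) a, HasDerivAt F (f x - (u' x - u x * c x) ^ 2) x := by
    intro x hx
    have hs := hsin x hx
    have hlin : HasDerivAt (fun y : ℝ => k * y) k x := by
      simpa using (hasDerivAt_id x).const_mul k
    have hsin_deriv : HasDerivAt (fun y => Real.sin (k * y)) (Real.cos (k * x) * k) x :=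
      (Real.hasDerivAt_sin (k * x)).comp x hlin
    have hcos_deriv : HasDerivAt (fun y => k * Real.cos (k * y)) (k * (-Real.sin (k * x) * k)) x :=
      ((Real.hasDerivAt_cos (k * x)).comp x hlin).const_mul k
    have hc : HasDerivAt c (-(k ^ 2) - c x ^ 2) x := by
      have hdiv := hcos_deriv.div hsin_deriv hs.ne'
      refine hdiv.congr_deriv ?_
      simp only [hc_def]
      field_simp
    have hF' := ((hu x).pow 2).mul hc
    refine hF'.congr_deriv ?_
    simp only [hf_def, hc_def, Pi.pow_apply]
    push_cast
    ring
  -- key inequality on truncated intervals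
  have key : ∀ ε ∈ Ioo (0:ℝ) (a/2), F (a - ε) - F ε ≤ ∫ x in ε..(a - ε), f x := by
    intro ε hε
    have hεa : ε ≤ a - ε := by linarith [hε.2]
    have hsub : Set.uIcc ε (a - ε) ⊆ Ioo 0 a := by
      rw [uIcc_of_le hεa]
      intro x hx
      exact ⟨lt_of_lt_of_le hε.1 hx.1, by linarith [hx.2, hε.1]⟩
    have hc_cont : ContinuousOn c (Set.uIcc ε (a - ε)) := by
      apply ContinuousOn.div
      · exact (continuous_const.mul (Real.continuous_cos.comp
          (continuous_const.mul continuous_id))).continuousOn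
      · exact (Real.continuous_sin.comp (continuous_const.mul continuous_id)).continuousOn
      · intro x hx; exact (hsin x (hsub hx)).ne'
    have hq_cont : ContinuousOn (fun x => (u' x - u x * c x) ^ 2) (Set.uIcc ε (a - ε)) :=
      (hu'.continuousOn.sub (hu_cont.continuousOn.mul hc_cont)).pow 2
    have hG_int : IntervalIntegrable (fun x => f x - (u' x - u x * c x) ^ 2) volume ε (a - ε) :=
      (hf_cont.continuousOn.sub hq_cont).intervalIntegrable
    have hFTC := intervalIntegral.integral_eq_sub_of_hasDerivAt (fun x hx => hF x (hsub hx)) hG_int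
    have hf_int : IntervalIntegrable f volume ε (a - ε) := hf_cont.intervalIntegrable ε (a - ε)
    have hq_int : IntervalIntegrable (fun x => (u' x - u x * c x) ^ 2) volume ε (a - ε) :=
      hq_cont.intervalIntegrable
    have hsplit : (∫ x in ε..(a-ε), (f x - (u' x - u x * c x) ^ 2))
        = (∫ x in ε..(a-ε), f x) - ∫ x in ε..(a-ε), (u' x - u x * c x) ^ 2 :=
      intervalIntegral.integral_sub hf_int hq_int
    have hnonneg : 0 ≤ ∫ x in ε..(a-ε), (u' x - u x * c x) ^ 2 :=
      intervalIntegral.integral_nonneg hεa (fun x _ => sq_nonneg _)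
    rw [hFTC] at hsplit
    linarith
  -- limit of the integrals
  have hfint_all : ∀ p q : ℝ, IntervalIntegrable f volume p q :=
    fun p q => hf_cont.intervalIntegrable p q
  have hP_cont : Continuous (fun y => ∫ x in (0:ℝ)..y, f x) :=
    intervalIntegral.continuous_primitive hfint_all 0
  have hIlim : Tendsto (fun ε => ∫ x in ε..(a - ε), f x) (𝓝[>] (0:ℝ))
      (𝓝 (∫ x in (0:ℝ)..a, f x)) := by
    have hrepr : ∀ ε : ℝ, (∫ x in ε..(a-ε), f x)
        = (∫ x in (0:ℝ)..(a-ε), f x) - ∫ x in (0:ℝ)..ε, f x := by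
      intro ε
      rw [eq_sub_iff_add_eq, add_comm]
      exact intervalIntegral.integral_add_adjacent_intervals (hfint_all 0 ε) (hfint_all ε (a-ε))
    simp_rw [hrepr]
    have h1 : Tendsto (fun ε : ℝ => ∫ x in (0:ℝ)..(a-ε), f x) (𝓝[>] (0:ℝ))
        (𝓝 (∫ x in (0:ℝ)..a, f x)) := by
      have hmap : Tendsto (fun ε : ℝ => a - ε) (𝓝[>] (0:ℝ)) (𝓝 a) := by
        have h' : Tendsto (fun ε : ℝ => a - ε) (𝓝 (0:ℝ)) (𝓝 (a - 0)) :=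
          tendsto_const_nhds.sub tendsto_id
        simpa using h'.mono_left nhdsWithin_le_nhds
      exact (hP_cont.tendsto a).comp hmap
    have h2 : Tendsto (fun ε : ℝ => ∫ x in (0:ℝ)..ε, f x) (𝓝[>] (0:ℝ)) (𝓝 0) := by
      have h' := (hP_cont.tendsto 0).mono_left (nhdsWithin_le_nhds : 𝓝[>] (0:ℝ) ≤ 𝓝 0)
      simpa using h'
    simpa using h1.sub h2
  have hIoo_mem : Ioo (0:ℝ) (a/2) ∈ 𝓝[>] (0:ℝ) :=
    Ioo_mem_nhdsGT_of_mem ⟨le_refl 0, half_pos ha⟩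
  have hq_lim : Tendsto (fun ε : ℝ => ε / Real.sin (k * ε)) (𝓝[>] (0:ℝ)) (𝓝 (1/k)) := by
    have hmap : Tendsto (fun ε : ℝ => k * ε) (𝓝[>] (0:ℝ)) (𝓝[≠] (0:ℝ)) := by
      apply tendsto_nhdsWithin_of_tendsto_nhds_of_eventually_within
      · have h' : Tendsto (fun ε : ℝ => k * ε) (𝓝 (0:ℝ)) (𝓝 (k * 0)) :=
          tendsto_const_nhds.mul tendsto_id
        simpa using h'.mono_left nhdsWithin_le_nhds
      · filter_upwards [self_mem_nhdsWithin] with ε hε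
        exact (mul_pos hk (mem_Ioi.mp hε)).ne'
    have h1 : Tendsto (fun ε : ℝ => Real.sin (k * ε) / (k * ε)) (𝓝[>] (0:ℝ)) (𝓝 1) :=
      tendsto_sin_div_self'.comp hmap
    have h2 : Tendsto (fun ε : ℝ => (k * ε) / Real.sin (k * ε)) (𝓝[>] (0:ℝ)) (𝓝 1) := by
      have h' := h1.inv₀ one_ne_zero
      simpa [inv_div] using h'
    have h3 := h2.const_mul (1/k)
    rw [mul_one] at h3
    refine h3.congr (fun ε => ?_)
    field_simp
  have hcos_lim : Tendsto (fun ε : ℝ => k * Real.cos (k * ε)) (𝓝[>] (0:ℝ)) (𝓝 k) := by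
    have h' : Tendsto (fun ε : ℝ => k * Real.cos (k * ε)) (𝓝 (0:ℝ)) (𝓝 (k * Real.cos (k * 0))) :=
      (continuous_const.mul (Real.continuous_cos.comp (continuous_const.mul continuous_id))).tendsto 0
    simpa using h'.mono_left nhdsWithin_le_nhds
  have hid_lim : Tendsto (fun ε : ℝ => ε) (𝓝[>] (0:ℝ)) (𝓝 0) :=
    tendsto_id.mono_left nhdsWithin_le_nhds
  have hFl : Tendsto (fun ε => F ε) (𝓝[>] (0:ℝ)) (𝓝 0) := by
    have hsl : Tendsto (fun ε : ℝ => u ε / ε) (𝓝[>] (0:ℝ)) (𝓝 (u' 0)) := by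
      have h := hasDerivAt_iff_tendsto_slope.mp (hu 0)
      have hmono : 𝓝[>] (0:ℝ) ≤ 𝓝[≠] (0:ℝ) :=
        nhdsWithin_mono 0 (fun x hx => ne_of_gt hx)
      refine (h.mono_left hmono).congr (fun ε => ?_)
      simp [slope_def_field, h0]
    have hlim : Tendsto
        (fun ε : ℝ => (u ε / ε) ^ 2 * (k * Real.cos (k * ε)) * (ε * (ε / Real.sin (k * ε))))
        (𝓝[>] (0:ℝ)) (𝓝 ((u' 0) ^ 2 * k * (0 * (1/k)))) :=
      ((hsl.pow 2).mul hcos_lim).mul (hid_lim.mul hq_lim)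
    rw [show (u' 0) ^ 2 * k * (0 * (1/k)) = 0 by ring] at hlim
    refine hlim.congr' ?_
    filter_upwards [hIoo_mem] with ε hε
    have hε0 : (ε:ℝ) ≠ 0 := ne_of_gt hε.1
    have hs : Real.sin (k * ε) ≠ 0 := (hsin ε ⟨hε.1, by linarith [hε.2]⟩).ne'
    simp only [hF_def, hc_def]
    field_simp
  have hFr : Tendsto (fun ε => F (a - ε)) (𝓝[>] (0:ℝ)) (𝓝 0) := by
    have hmap : Tendsto (fun ε : ℝ => a - ε) (𝓝[>] (0:ℝ)) (𝓝[≠] a) := by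
      apply tendsto_nhdsWithin_of_tendsto_nhds_of_eventually_within
      · have h' : Tendsto (fun ε : ℝ => a - ε) (𝓝 (0:ℝ)) (𝓝 (a - 0)) :=
          tendsto_const_nhds.sub tendsto_id
        simpa using h'.mono_left nhdsWithin_le_nhds
      · filter_upwards [self_mem_nhdsWithin] with ε hε
        simp only [mem_compl_iff, mem_singleton_iff]
        intro hcontra
        have hε' : (ε:ℝ) = 0 := by linarith [sub_eq_self.mp hcontra]
        exact (mem_Ioi.mp hε).ne' hε'
    have hsl2 : Tendsto (fun ε : ℝ => u (a - ε) / ε) (𝓝[>] (0:ℝ)) (𝓝 (-u' a)) := by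
      have h := hasDerivAt_iff_tendsto_slope.mp (hu a)
      have hcomp := (h.comp hmap).neg
      refine hcomp.congr (fun ε => ?_)
      simp only [Function.comp_apply, slope_def_field, hA, sub_zero]
      rw [show a - ε - a = -ε by ring, div_neg, neg_neg]
    have hlim : Tendsto
        (fun ε : ℝ =>
          (u (a - ε) / ε) ^ 2 * (-(k * Real.cos (k * ε))) * (ε * (ε / Real.sin (k * ε))))
        (𝓝[>] (0:ℝ)) (𝓝 ((-u' a) ^ 2 * (-k) * (0 * (1/k)))) :=
      ((hsl2.pow 2).mul hcos_lim.neg).mul (hid_lim.mul hq_lim)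
    rw [show (-u' a) ^ 2 * (-k) * (0 * (1/k)) = 0 by ring] at hlim
    refine hlim.congr' ?_
    filter_upwards [hIoo_mem] with ε hε
    have hε0 : (ε:ℝ) ≠ 0 := ne_of_gt hε.1
    have hs : Real.sin (k * ε) ≠ 0 := (hsin ε ⟨hε.1, by linarith [hε.2]⟩).ne'
    have hpi : k * (a - ε) = Real.pi - k * ε := by rw [mul_sub, hka]
    simp only [hF_def, hc_def, hpi, Real.sin_pi_sub, Real.cos_pi_sub]
    field_simp
  have hmain : 0 ≤ ∫ x in (0:ℝ)..a, f x := by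
    have hbd : Tendsto (fun ε => F (a - ε) - F ε) (𝓝[>] (0:ℝ)) (𝓝 0) := by
      simpa using hFr.sub hFl
    refine le_of_tendsto_of_tendsto hbd hIlim ?_
    filter_upwards [hIoo_mem] with ε hε using key ε hε
  have hsplit2 : (∫ x in (0:ℝ)..a, f x)
      = (∫ x in (0:ℝ)..a, u' x ^ 2) - k ^ 2 * ∫ x in (0:ℝ)..a, u x ^ 2 := by
    rw [← intervalIntegral.integral_const_mul]
    exact intervalIntegral.integral_sub ((hu'.pow 2).intervalIntegrable 0 a)
      ((continuous_const.mul (hu_cont.pow 2)).intervalIntegrable 0 a)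
  linarith


/-- Backward uniqueness separation for 1D parabolic equations on a subinterval: if
`ν(π/x₀)² > L` and `v` is a bounded (uniformly in time, in `L²(0,x₀)`) classical solution
of `∂ₜv = ν ∂ₓ²v - l(t,x)v` on `ℝ × [0,x₀]` with `v(t,0) = v(t,x₀) = 0` and
`‖l(t,·)‖_{C[0,x₀]} ≤ L`, then `v ≡ 0`. -/
theorem stmt_17 (L ν x₀ : ℝ) (hL : 0 < L) (hν : 0 < ν)
    (hx₀ : x₀ ∈ Set.Ioo 0 Real.pi)
    (hgap : L < ν * (Real.pi / x₀) ^ 2)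
    (v l : ℝ → ℝ → ℝ)
    (hsmooth : ContDiff ℝ 2 (fun p : ℝ × ℝ => v p.1 p.2))
    (hl : ∀ t : ℝ, ∀ x ∈ Set.Icc 0 x₀, |l t x| ≤ L)
    (heq : ∀ t : ℝ, ∀ x ∈ Set.Icc 0 x₀,
      deriv (fun s => v s x) t = ν * deriv (deriv (fun y => v t y)) x - l t x * v t x)
    (hbc : ∀ t : ℝ, v t 0 = 0 ∧ v t x₀ = 0)
    (hbound : ∃ M : ℝ, ∀ t : ℝ, ∫ x in (0:ℝ)..x₀, (v t x) ^ 2 ≤ M) :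
    ∀ t : ℝ, ∀ x ∈ Set.Icc 0 x₀, v t x = 0 := by
  obtain ⟨hx0, hxpi⟩ := hx₀
  obtain ⟨M, hM⟩ := hbound
  set φ : ℝ × ℝ → ℝ := fun p => v p.1 p.2 with hφ_def
  have hφ1 : ContDiff ℝ 1 φ := hsmooth.of_le one_le_two
  have hφdiff : Differentiable ℝ φ := hφ1.differentiable one_ne_zero
  have hcurve_t : ∀ (t x : ℝ), HasDerivAt (fun s : ℝ => (s, x)) ((1:ℝ), (0:ℝ)) t := fun t x =>
    (hasDerivAt_id t).prodMk (hasDerivAt_const t x)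
  have hcurve_x : ∀ (t x : ℝ), HasDerivAt (fun y : ℝ => (t, y)) ((0:ℝ), (1:ℝ)) x := fun t x =>
    (hasDerivAt_const x t).prodMk (hasDerivAt_id x)
  have hvt : ∀ t x, HasDerivAt (fun s => v s x) (fderiv ℝ φ (t, x) (1, 0)) t := fun t x =>
    by have h := (hφdiff (t, x)).hasFDerivAt.comp_hasDerivAt t (hcurve_t t x); exact h
  have hvx : ∀ t x, HasDerivAt (fun y => v t y) (fderiv ℝ φ (t, x) (0, 1)) x := fun t x =>
    (hφdiff (t, x)).hasFDerivAt.comp_hasDerivAt x (hcurve_x t x)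
  set g : ℝ × ℝ → ℝ := fun p => fderiv ℝ φ p (0, 1) with hg_def
  have hg1 : ContDiff ℝ 1 g :=
    (hsmooth.fderiv_right (by norm_num)).clm_apply contDiff_const
  have hgdiff : Differentiable ℝ g := hg1.differentiable one_ne_zero
  have hgx : ∀ t x, HasDerivAt (fun y => g (t, y)) (fderiv ℝ g (t, x) (0, 1)) x := fun t x =>
    (hgdiff (t, x)).hasFDerivAt.comp_hasDerivAt x (hcurve_x t x)
  have hderiv_x_eq : ∀ t, (deriv fun y => v t y) = fun x => g (t, x) :=
    fun t => funext fun x => (hvx t x).deriv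
  have hg_cont : Continuous g := hg1.continuous
  have hvt_cont : Continuous (fun p : ℝ × ℝ => fderiv ℝ φ p (1, 0)) :=
    (((hsmooth.fderiv_right (by norm_num)).clm_apply contDiff_const :
      ContDiff ℝ 1 fun p : ℝ × ℝ => fderiv ℝ φ p (1, 0))).continuous
  have hgx_cont : Continuous (fun p : ℝ × ℝ => fderiv ℝ g p (0, 1)) :=
    (((hg1.fderiv_right (by norm_num)).clm_apply contDiff_const :
      ContDiff ℝ 0 fun p : ℝ × ℝ => fderiv ℝ g p (0, 1))).continuous
  have hv_cont : Continuous φ := hsmooth.continuous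
  have hpde : ∀ t : ℝ, ∀ x ∈ Set.Icc 0 x₀,
      fderiv ℝ φ (t, x) (1, 0) = ν * fderiv ℝ g (t, x) (0, 1) - l t x * v t x := by
    intro t x hx
    have h1 := heq t x hx
    have h2 : deriv (fun s => v s x) t = fderiv ℝ φ (t, x) (1, 0) := (hvt t x).deriv
    have h3 : deriv (deriv (fun y => v t y)) x = fderiv ℝ g (t, x) (0, 1) := by
      rw [hderiv_x_eq t]; exact (hgx t x).deriv
    rw [h2, h3] at h1
    exact h1
  set E : ℝ → ℝ := fun t => ∫ x in (0:ℝ)..x₀, (v t x) ^ 2 with hE_def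
  set D : ℝ → ℝ := fun t => ∫ x in (0:ℝ)..x₀, 2 * v t x * fderiv ℝ φ (t, x) (1, 0) with hD_def
  have hE_deriv : ∀ t, HasDerivAt E (D t) t := by
    intro t
    obtain ⟨C, hC⟩ := IsCompact.exists_bound_of_continuousOn
      ((isCompact_Icc (a := t - 1) (b := t + 1)).prod (isCompact_Icc (a := (0:ℝ)) (b := x₀)))
      (((continuous_const.mul hv_cont).mul hvt_cont).continuousOn)
    have hdom := intervalIntegral.hasDerivAt_integral_of_dominated_loc_of_deriv_le
      (F := fun s x => (v s x) ^ 2)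
      (F' := fun s x => 2 * v s x * fderiv ℝ φ (s, x) (1, 0))
      (x₀ := t) (s := Metric.ball t 1) (bound := fun _ => C) (Metric.ball_mem_nhds t one_pos)
      (Filter.Eventually.of_forall fun s =>
        ((hv_cont.comp (Continuous.prodMk_right s)).pow 2).aestronglyMeasurable)
      (((hv_cont.comp (Continuous.prodMk_right t)).pow 2).intervalIntegrable 0 x₀)
      (((continuous_const.mul (hv_cont.comp (Continuous.prodMk_right t))).mul
        (hvt_cont.comp (Continuous.prodMk_right t))).aestronglyMeasurable)
      ?_ (_root_.intervalIntegrable_const (μ := MeasureTheory.volume) (c := C)) ?_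
    · exact hdom.2
    · apply Filter.Eventually.of_forall
      intro x hx s hs
      show ‖2 * v s x * fderiv ℝ φ (s, x) (1, 0)‖ ≤ C
      refine hC (s, x) (Set.mem_prod.mpr ⟨?_, ?_⟩)
      · rw [Metric.mem_ball, Real.dist_eq] at hs
        have habs := abs_lt.mp hs
        exact ⟨by linarith [habs.1], by linarith [habs.2]⟩
      · rw [Set.uIoc_of_le hx0.le] at hx
        exact Set.Ioc_subset_Icc_self hx
    · apply Filter.Eventually.of_forall
      intro x hx s hs
      simpa using (hvt s x).fun_pow 2
  have hcgap : 0 < ν * (Real.pi / x₀) ^ 2 - L := by linarith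
  set c : ℝ := ν * (Real.pi / x₀) ^ 2 - L with hc_def
  have hE_nonneg : ∀ t, 0 ≤ E t := fun t =>
    intervalIntegral.integral_nonneg hx0.le fun x _ => sq_nonneg _
  have hD_le : ∀ t, D t ≤ -(2 * c) * E t := by
    intro t
    have hvcx : Continuous (fun x => v t x) := hv_cont.comp (Continuous.prodMk_right t)
    have hgcx : Continuous (fun x => g (t, x)) := hg_cont.comp (Continuous.prodMk_right t)
    have hgxcx : Continuous (fun x => fderiv ℝ g (t, x) (0, 1)) :=
      hgx_cont.comp (Continuous.prodMk_right t)
    have hint1 : IntervalIntegrable (fun x => 2 * v t x * fderiv ℝ φ (t, x) (1, 0))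
        MeasureTheory.volume 0 x₀ :=
      (((continuous_const.mul hvcx).mul (hvt_cont.comp (Continuous.prodMk_right t))).intervalIntegrable 0 x₀)
    have hint2 : IntervalIntegrable
        (fun x => 2 * ν * (v t x * fderiv ℝ g (t, x) (0, 1)) + 2 * L * (v t x) ^ 2)
        MeasureTheory.volume 0 x₀ :=
      (((continuous_const.mul (hvcx.mul hgxcx)).add
        (continuous_const.mul (hvcx.pow 2))).intervalIntegrable 0 x₀)
    have hpt : ∀ x ∈ Set.Icc (0:ℝ) x₀,
        2 * v t x * fderiv ℝ φ (t, x) (1, 0)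
          ≤ 2 * ν * (v t x * fderiv ℝ g (t, x) (0, 1)) + 2 * L * (v t x) ^ 2 := by
      intro x hx
      rw [hpde t x hx]
      have hb := abs_le.mp (hl t x hx)
      nlinarith [sq_nonneg (v t x), hb.1, hb.2]
    have hmono := intervalIntegral.integral_mono_on hx0.le hint1 hint2 hpt
    have hsplit : (∫ x in (0:ℝ)..x₀,
        (2 * ν * (v t x * fderiv ℝ g (t, x) (0, 1)) + 2 * L * (v t x) ^ 2))
        = 2 * ν * (∫ x in (0:ℝ)..x₀, v t x * fderiv ℝ g (t, x) (0, 1)) + 2 * L * E t := by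
      rw [intervalIntegral.integral_add (f := fun x => 2 * ν * (v t x * fderiv ℝ g (t, x) (0, 1)))
        (g := fun x => 2 * L * (v t x) ^ 2)
        ((continuous_const.mul (hvcx.mul hgxcx)).intervalIntegrable 0 x₀)
        ((continuous_const.mul (hvcx.pow 2)).intervalIntegrable 0 x₀),
        intervalIntegral.integral_const_mul, intervalIntegral.integral_const_mul]
    have hibp : (∫ x in (0:ℝ)..x₀, v t x * fderiv ℝ g (t, x) (0, 1))
        = - ∫ x in (0:ℝ)..x₀, (g (t, x)) ^ 2 := by
      have h := intervalIntegral.integral_mul_deriv_eq_deriv_mul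
        (u := fun x => v t x) (u' := fun x => g (t, x))
        (v := fun x => g (t, x)) (v' := fun x => fderiv ℝ g (t, x) (0, 1))
        (fun x _ => hvx t x) (fun x _ => hgx t x)
        (hgcx.intervalIntegrable 0 x₀) (hgxcx.intervalIntegrable 0 x₀)
      simp only [(hbc t).1, (hbc t).2, zero_mul, mul_zero, sub_zero, zero_sub] at h
      simpa [pow_two] using h
    have hwirt := wirtinger_aux hx0 (fun x => v t x) (fun x => g (t, x))
      (fun x => hvx t x) hgcx (hbc t).1 (hbc t).2
    have hDle2 : D t ≤ 2 * ν * (∫ x in (0:ℝ)..x₀, v t x * fderiv ℝ g (t, x) (0, 1)) + 2 * L * E t := by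
      calc D t ≤ _ := hmono
        _ = _ := hsplit
    rw [hibp] at hDle2
    have hνE : 2 * ν * -(∫ x in (0:ℝ)..x₀, (g (t, x)) ^ 2)
        ≤ 2 * ν * -((Real.pi / x₀) ^ 2 * E t) := by
      have := hwirt
      nlinarith [hν.le]
    have : D t ≤ 2 * ν * -((Real.pi / x₀) ^ 2 * E t) + 2 * L * E t := by linarith
    calc D t ≤ 2 * ν * -((Real.pi / x₀) ^ 2 * E t) + 2 * L * E t := this
      _ = -(2 * c) * E t := by rw [hc_def]; ring
  set G : ℝ → ℝ := fun t => E t * Real.exp (2 * c * t) with hG_def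
  have hG_deriv : ∀ t, HasDerivAt G ((D t + 2 * c * E t) * Real.exp (2 * c * t)) t := by
    intro t
    have h1 : HasDerivAt (fun t : ℝ => 2 * c * t) (2 * c) t := by
      simpa using (hasDerivAt_id t).const_mul (2 * c)
    have hexp := h1.exp
    have h2 := (hE_deriv t).mul hexp
    refine h2.congr_deriv ?_
    ring
  have hG_anti : Antitone G := by
    apply antitone_of_deriv_nonpos
    · intro t; exact (hG_deriv t).differentiableAt
    · intro t
      rw [(hG_deriv t).deriv]
      have h1 : D t + 2 * c * E t ≤ 0 := by
        have := hD_le t; have := hE_nonneg t; nlinarith [hD_le t]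
      nlinarith [Real.exp_pos (2 * c * t), h1]
  have hE_zero : ∀ t, E t = 0 := by
    intro t
    have hle : ∀ s ≤ t, E t * Real.exp (2 * c * t) ≤ M * Real.exp (2 * c * s) := by
      intro s hs
      have h1 : G t ≤ G s := hG_anti hs
      have h2 : E s * Real.exp (2 * c * s) ≤ M * Real.exp (2 * c * s) :=
        mul_le_mul_of_nonneg_right (hM s) (Real.exp_pos _).le
      calc E t * Real.exp (2 * c * t) = G t := rfl
        _ ≤ G s := h1
        _ = E s * Real.exp (2 * c * s) := rfl
        _ ≤ M * Real.exp (2 * c * s) := h2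
    have htend : Filter.Tendsto (fun s : ℝ => M * Real.exp (2 * c * s)) Filter.atBot (𝓝 0) := by
      have h1 : Filter.Tendsto (fun s : ℝ => 2 * c * s) Filter.atBot Filter.atBot :=
        Filter.Tendsto.const_mul_atBot (by positivity) Filter.tendsto_id
      have h2 := Real.tendsto_exp_atBot.comp h1
      have h3 := h2.const_mul M
      simpa using h3
    have hle' : E t * Real.exp (2 * c * t) ≤ 0 := by
      apply ge_of_tendsto htend
      filter_upwards [Filter.eventually_le_atBot t] with s hs using hle s hs
    nlinarith [Real.exp_pos (2 * c * t), hE_nonneg t, hle']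
  intro t x hx
  rcases eq_or_lt_of_le hx.1 with h0 | h0
  · rw [← h0]; exact (hbc t).1
  rcases eq_or_lt_of_le hx.2 with h1 | h1
  · rw [h1]; exact (hbc t).2
  set P : ℝ → ℝ := fun y => ∫ z in (0:ℝ)..y, (v t z) ^ 2 with hP_def
  have hvx2_cont : Continuous (fun z => (v t z) ^ 2) :=
    (hv_cont.comp (Continuous.prodMk_right t)).pow 2
  have hPint : ∀ p q : ℝ, IntervalIntegrable (fun z => (v t z) ^ 2) MeasureTheory.volume p q :=
    fun p q => hvx2_cont.intervalIntegrable p q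
  have hP_zero : ∀ y ∈ Set.Icc (0:ℝ) x₀, P y = 0 := by
    intro y hy
    have ha1 : 0 ≤ P y := intervalIntegral.integral_nonneg hy.1 fun z _ => sq_nonneg _
    have ha2 : P y + (∫ z in y..x₀, (v t z) ^ 2) = E t :=
      intervalIntegral.integral_add_adjacent_intervals (hPint 0 y) (hPint y x₀)
    have ha3 : 0 ≤ ∫ z in y..x₀, (v t z) ^ 2 :=
      intervalIntegral.integral_nonneg hy.2 fun z _ => sq_nonneg _
    have ha4 := hE_zero t
    linarith
  have hP_deriv : HasDerivAt P ((v t x) ^ 2) x :=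
    intervalIntegral.integral_hasDerivAt_right (hPint 0 x)
      (hvx2_cont.stronglyMeasurableAtFilter _ _) hvx2_cont.continuousAt
  have hP_loc : P =ᶠ[𝓝 x] fun _ => (0:ℝ) := by
    filter_upwards [Ioo_mem_nhds h0 h1] with y hy using hP_zero y ⟨hy.1.le, hy.2.le⟩
  have hzero : HasDerivAt P 0 x :=
    (hasDerivAt_const x (0:ℝ)).congr_of_eventuallyEq hP_loc
  have hfinal := hP_deriv.unique hzero
  exact pow_eq_zero_iff (two_ne_zero) |>.mp hfinal
end

section
/- Pullback ω-limit sets give pullback attractors: let U(t,τ), t ≥ τ, be a dynamical process on a family of Hausdorff topological spaces {Φ_t}_{t∈ℝ} (U(τ,τ)=id, U(t,s)=U(t,τ)∘U(τ,s) for t≥τ≥s), equipped with a bornology 𝔹 of time-dependent sets. If U possesses a compact pullback attracting family 𝓑 = {𝓑(t)}, then there exists a pullback attractor 𝓐 = {𝓐(t)}: for each t, 𝓐(t) is compact in Φ_t, 𝓐 pullback attracts every B ∈ 𝔹, and 𝓐 is minimal by inclusion with these properties; moreover 𝓐(t) ⊆ 𝓑(t) for all t. -/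
open Set Filter Topology

variable {Φ : ℝ → Type*} [∀ t, TopologicalSpace (Φ t)]

/-- The family `𝓑` pullback attracts the time-dependent set `B` under the process `U`:
for every `t` and every open neighbourhood `O` of `𝓑 t` there is `T` such that
`U t (t-s) (B (t-s)) ⊆ O` for all `s ≥ T`. -/
def PullbackAttracts (U : ∀ t τ : ℝ, Φ τ → Φ t)
    (𝓑 B : ∀ t : ℝ, Set (Φ t)) : Prop :=
  ∀ t : ℝ, ∀ O : Set (Φ t), IsOpen O → 𝓑 t ⊆ O →
    ∃ T : ℝ, 0 ≤ T ∧ ∀ s : ℝ, T ≤ s → U t (t - s) '' B (t - s) ⊆ O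

/-- Existence of pullback attractors: if a dynamical process `U(t,τ)` on a family of
Hausdorff topological spaces, equipped with a bornology `𝔹` of time-dependent sets,
possesses a compact pullback attracting family `𝓑`, then there is a pullback attractor
`𝓐`: each `𝓐 t` is compact, `𝓐` pullback attracts every `B ∈ 𝔹`, `𝓐` is minimal by
inclusion with these properties, and `𝓐 t ⊆ 𝓑 t` for all `t`. -/
theorem stmt_18 [∀ t, T2Space (Φ t)]
    (U : ∀ t τ : ℝ, Φ τ → Φ t)
    (hU0 : ∀ τ : ℝ, ∀ x : Φ τ, U τ τ x = x)
    (hUcomp : ∀ t τ s : ℝ, s ≤ τ → τ ≤ t → ∀ x : Φ s, U t s x = U t τ (U τ s x))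
    (𝔹 : Set (∀ t : ℝ, Set (Φ t)))
    (h𝔹 : ∀ B ∈ 𝔹, ∀ t : ℝ, (B t).Nonempty)
    (𝓑 : ∀ t : ℝ, Set (Φ t))
    (h𝓑c : ∀ t : ℝ, IsCompact (𝓑 t))
    (h𝓑attr : ∀ B ∈ 𝔹, PullbackAttracts U 𝓑 B) :
    ∃ 𝓐 : ∀ t : ℝ, Set (Φ t),
      (∀ t : ℝ, IsCompact (𝓐 t)) ∧
      (∀ B ∈ 𝔹, PullbackAttracts U 𝓐 B) ∧
      (∀ 𝓐' : ∀ t : ℝ, Set (Φ t), (∀ t : ℝ, IsCompact (𝓐' t)) →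
        (∀ B ∈ 𝔹, PullbackAttracts U 𝓐' B) → ∀ t : ℝ, 𝓐 t ⊆ 𝓐' t) ∧
      (∀ t : ℝ, 𝓐 t ⊆ 𝓑 t) := by
  classical
  set ω : (∀ t : ℝ, Set (Φ t)) → ∀ t : ℝ, Set (Φ t) :=
    fun B t => ⋂ s : ℝ, closure (⋃ τ ∈ Ici s, U t (t - τ) '' B (t - τ)) with hωdef
  -- key: ω B t is contained in any compact set attracting B
  have key : ∀ (B A : ∀ t : ℝ, Set (Φ t)), (∀ t, IsCompact (A t)) →
      PullbackAttracts U A B → ∀ t, ω B t ⊆ A t := by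
    intro B A hAc hAatt t x hx
    by_contra hxA
    obtain ⟨V, O, hV, hO, hxV, hAO, hdisj⟩ :=
      SeparatedNhds.of_isCompact_isCompact isCompact_singleton (hAc t)
        (disjoint_singleton_left.mpr hxA)
    obtain ⟨T, -, hT⟩ := hAatt t O hO hAO
    have hx' : x ∈ closure (⋃ τ ∈ Ici T, U t (t - τ) '' B (t - τ)) := mem_iInter.mp hx T
    have hsub : (⋃ τ ∈ Ici T, U t (t - τ) '' B (t - τ)) ⊆ O :=
      iUnion₂_subset fun τ hτ => hT τ hτ
    have : x ∈ closure O := closure_mono hsub hx'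
    have hVO : closure O ⊆ Vᶜ := by
      apply closure_minimal _ hV.isClosed_compl
      exact fun y hy hyV => (hdisj.ne_of_mem hyV hy) rfl
    exact hVO this (hxV rfl)
  set 𝓐 : ∀ t : ℝ, Set (Φ t) := fun t => closure (⋃ B ∈ 𝔹, ω B t) with h𝓐def
  have h𝓐𝓑 : ∀ t, 𝓐 t ⊆ 𝓑 t := fun t =>
    closure_minimal (iUnion₂_subset fun B hB => key B 𝓑 h𝓑c (h𝓑attr B hB) t)
      (h𝓑c t).isClosed
  have h𝓐c : ∀ t, IsCompact (𝓐 t) := fun t =>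
    (h𝓑c t).of_isClosed_subset isClosed_closure (h𝓐𝓑 t)
  refine ⟨𝓐, h𝓐c, ?_, ?_, h𝓐𝓑⟩
  · -- attraction
    intro B hB t O hO hAO
    by_contra hcon
    push_neg at hcon
    have hchoice : ∀ r : ℝ, ∃ s : ℝ, r ≤ s ∧ ∃ a ∈ U t (t - s) '' B (t - s), a ∉ O := by
      intro r
      obtain ⟨s, hs, hns⟩ := hcon (max r 0) (le_max_right _ _)
      exact ⟨s, le_trans (le_max_left _ _) hs, not_subset.mp hns⟩
    choose σ hσ y hy hyO using hchoice
    -- cluster point of y along atTop inside 𝓑 t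
    have hclus : ∃ z ∈ 𝓑 t, ClusterPt z (map y atTop) := by
      by_contra hno
      push_neg at hno
      have hV : ∀ z ∈ 𝓑 t, ∃ V : Set (Φ t), IsOpen V ∧ z ∈ V ∧ ∀ᶠ r in atTop, y r ∉ V := by
        intro z hz
        have h1 := hno z hz
        rw [clusterPt_iff_nonempty] at h1
        push_neg at h1
        obtain ⟨N, hN, S, hS, hNS⟩ := h1
        refine ⟨interior N, isOpen_interior, mem_interior_iff_mem_nhds.mpr hN, ?_⟩
        have hev : ∀ᶠ r in atTop, y r ∈ S := hS
        filter_upwards [hev] with r hr hmem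
        exact eq_empty_iff_forall_notMem.mp hNS (y r) ⟨interior_subset hmem, hr⟩
      choose V hVopen hVmem hVev using hV
      obtain ⟨tf, htf⟩ := (h𝓑c t).elim_nhds_subcover' (fun z hz => V z hz)
        (fun z hz => (hVopen z hz).mem_nhds (hVmem z hz))
      set W : Set (Φ t) := ⋃ z ∈ tf, V z.1 z.2 with hWdef
      have hWopen : IsOpen W := isOpen_biUnion fun z _ => hVopen z.1 z.2
      obtain ⟨T, hT0, hT⟩ := h𝓑attr B hB t W hWopen htf
      have hevin : ∀ᶠ r in atTop, y r ∈ W := by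
        filter_upwards [eventually_ge_atTop T] with r hr
        exact hT (σ r) (hr.trans (hσ r)) (hy r)
      have hevW : ∀ᶠ r in atTop, y r ∉ W := by
        have hall : ∀ᶠ r in atTop, ∀ z ∈ tf, y r ∉ V z.1 z.2 :=
          (eventually_all_finset tf).mpr fun z _ => hVev z.1 z.2
        filter_upwards [hall] with r hr hmem
        obtain ⟨z, hz, hmemz⟩ := mem_iUnion₂.mp hmem
        exact hr z hz hmemz
      obtain ⟨r, h1, h2⟩ := (hevin.and hevW).exists
      exact h2 h1
    obtain ⟨z, hz𝓑, hzc⟩ := hclus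
    have hzω : z ∈ ω B t := by
      refine mem_iInter.mpr fun s => ?_
      rw [mem_closure_iff_clusterPt]
      refine hzc.mono (le_principal_iff.mpr ?_)
      rw [mem_map]
      filter_upwards [eventually_ge_atTop s] with r hr
      exact mem_biUnion (mem_Ici.mpr (hr.trans (hσ r))) (hy r)
    have hzO : z ∈ O := hAO (subset_closure (mem_biUnion hB hzω))
    have hzOc : z ∈ Oᶜ := by
      have : z ∈ closure (Oᶜ) := by
        rw [mem_closure_iff_clusterPt]
        refine hzc.mono (le_principal_iff.mpr ?_)
        rw [mem_map]
        exact Eventually.of_forall fun r => hyO r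
      rwa [hO.isClosed_compl.closure_eq] at this
    exact hzOc hzO
  · -- minimality
    intro 𝓐' h𝓐'c h𝓐'attr t
    exact closure_minimal (iUnion₂_subset fun B hB => key B 𝓐' h𝓐'c (h𝓐'attr B hB) t)
      (h𝓐'c t).isClosed
end

section
/- Forward attraction in probability for random attractors: let S_ξ(t) be a random dynamical system over a measure-preserving group T(t) on a probability space (Ψ,μ), possessing a random pullback attractor {𝓐(ξ)} with respect to a bornology 𝔹 of random sets, in a Polish space Φ. Then for every B ∈ 𝔹 and every ε > 0, μ{ ξ ∈ Ψ : dist_Φ(S_ξ(t)B(ξ), 𝓐(T(t)ξ)) > ε } → 0 as t → +∞; i.e., the random attractor attracts forward in time in measure. -/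
open Set Filter Topology MeasureTheory ENNReal

/-- The one-sided Hausdorff semidistance (in `ℝ≥0∞`) between two subsets of an extended
metric space: `hd A B = ⨆_{a ∈ A} inf_{b ∈ B} d(a,b)`. -/
noncomputable def hausdorffSemidist {Φ : Type*} [EMetricSpace Φ] (A B : Set Φ) : ℝ≥0∞ :=
  ⨆ x ∈ A, EMetric.infEdist x B

/-- Forward attraction in probability for random attractors: if `S ξ t` is a random
dynamical system over the measure-preserving ergodic group `T` on a probability space
`(Ψ, μ)`, acting on a Polish space `Φ`, and `𝓐` is a random pullback attractor for the
bornology `𝔹` (pullback attraction holds almost surely), then for every `B ∈ 𝔹` and every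
`ε > 0` the measure of `{ξ : dist(S ξ t (B ξ), 𝓐(T t ξ)) > ε}` tends to `0` as
`t → +∞`; i.e. the random attractor attracts forward in time in measure. -/
theorem stmt_19 {Ψ : Type*} [MeasurableSpace Ψ] (μ : Measure Ψ) [IsProbabilityMeasure μ]
    {Φ : Type*} [MetricSpace Φ] [TopologicalSpace.SeparableSpace Φ] [CompleteSpace Φ]
    (T : ℝ → Ψ → Ψ)
    (hTmp : ∀ t : ℝ, MeasurePreserving (T t) μ μ)
    (hT0 : T 0 = id)
    (hTadd : ∀ t s : ℝ, T (t + s) = T t ∘ T s)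
    (S : Ψ → ℝ → Φ → Φ)
    (hS0 : ∀ ξ : Ψ, S ξ 0 = id)
    (hScoc : ∀ ξ : Ψ, ∀ t s : ℝ, 0 ≤ t → 0 ≤ s →
      S ξ (t + s) = S (T s ξ) t ∘ S ξ s)
    (𝔹 : Set (Ψ → Set Φ))
    (𝓐 : Ψ → Set Φ)
    (h𝓐c : ∀ᵐ ξ ∂μ, IsCompact (𝓐 ξ))
    (hpullback : ∀ B ∈ 𝔹, ∀ᵐ ξ ∂μ,
      Tendsto (fun t : ℝ => hausdorffSemidist (S (T (-t) ξ) t '' B (T (-t) ξ)) (𝓐 ξ))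
        atTop (𝓝 0))
    (hmeas : ∀ B ∈ 𝔹, ∀ t : ℝ,
      Measurable (fun ξ : Ψ => hausdorffSemidist (S ξ t '' B ξ) (𝓐 (T t ξ)))) :
    ∀ B ∈ 𝔹, ∀ ε : ℝ≥0∞, 0 < ε →
      Tendsto (fun t : ℝ =>
          μ {ξ : Ψ | ε < hausdorffSemidist (S ξ t '' B ξ) (𝓐 (T t ξ))})
        atTop (𝓝 0) := by

  intro B hB ε hε
  -- f t ξ : forward quantity, g t η : pullback quantity
  set f : ℝ → Ψ → ℝ≥0∞ := fun t ξ =>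
    hausdorffSemidist (S ξ t '' B ξ) (𝓐 (T t ξ)) with hf
  set g : ℝ → Ψ → ℝ≥0∞ := fun t η =>
    hausdorffSemidist (S (T (-t) η) t '' B (T (-t) η)) (𝓐 η) with hg
  have hTinv : ∀ t : ℝ, ∀ ξ : Ψ, T (-t) (T t ξ) = ξ := by
    intro t ξ
    have := hTadd (-t) t
    simp only [neg_add_cancel, hT0] at this
    exact (congrFun this ξ).symm
  have hTinv' : ∀ t : ℝ, ∀ η : Ψ, T t (T (-t) η) = η := by
    intro t η
    have := hTadd t (-t)
    simp only [add_neg_cancel, hT0] at this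
    exact (congrFun this η).symm
  have hfg : ∀ t ξ, f t ξ = g t (T t ξ) := by
    intro t ξ
    simp only [hf, hg, hTinv]
  have hgf : ∀ t η, g t η = f t (T (-t) η) := by
    intro t η
    simp only [hf, hg, hTinv']
  have hgmeas : ∀ t : ℝ, Measurable (g t) := by
    intro t
    have : g t = f t ∘ T (-t) := by funext η; exact hgf t η
    rw [this]
    exact (hmeas B hB t).comp (hTmp (-t)).measurable
  -- change of variables
  have hkey : ∀ t : ℝ, μ {ξ : Ψ | ε < f t ξ} = μ {η : Ψ | ε < g t η} := by
    intro t
    have hset : {ξ : Ψ | ε < f t ξ} = T t ⁻¹' {η : Ψ | ε < g t η} := by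
      ext ξ; simp [hfg t ξ]
    rw [hset, (hTmp t).measure_preimage
      ((measurableSet_lt measurable_const (hgmeas t)).nullMeasurableSet)]
  have hrw : (fun t : ℝ => μ {ξ : Ψ | ε < f t ξ}) = fun t : ℝ => μ {η : Ψ | ε < g t η} := by
    funext t; exact hkey t
  rw [hrw]
  -- now use Markov + dominated convergence
  set c : ℝ≥0∞ := min ε 1 with hc
  have hc0 : c ≠ 0 := by
    simp only [hc, ne_eq]
    exact (lt_min hε zero_lt_one).ne'
  have hctop : c ≠ ∞ := by
    simp only [hc]
    exact ne_top_of_le_ne_top one_ne_top (min_le_right _ _)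
  have hae := hpullback B hB
  have hItendsto :
      Tendsto (fun t : ℝ => ∫⁻ η, min (g t η) 1 ∂μ) atTop (𝓝 0) := by
    have h0 : (0 : ℝ≥0∞) = ∫⁻ (_ : Ψ), 0 ∂μ := by simp
    rw [h0]
    apply tendsto_lintegral_filter_of_dominated_convergence (fun _ => 1)
    · exact Eventually.of_forall fun t => ((hgmeas t).min measurable_const)
    · exact Eventually.of_forall fun t =>
        Eventually.of_forall fun η => min_le_right _ _
    · simp
    · filter_upwards [hae] with η hη
      have : Tendsto (fun t : ℝ => g t η) atTop (𝓝 0) := hη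
      have hmin : Tendsto (fun t : ℝ => min (g t η) 1) atTop (𝓝 (min 0 1)) :=
        Tendsto.min this tendsto_const_nhds
      simpa using hmin
  have hupper : ∀ t : ℝ, μ {η : Ψ | ε < g t η} ≤ (∫⁻ η, min (g t η) 1 ∂μ) / c := by
    intro t
    have hsub : {η : Ψ | ε < g t η} ⊆ {η : Ψ | c ≤ min (g t η) 1} := by
      intro η hη
      have hη' : ε < g t η := hη
      exact le_min (le_trans (min_le_left _ _) hη'.le) (min_le_right _ _)
    calc μ {η : Ψ | ε < g t η} ≤ μ {η : Ψ | c ≤ min (g t η) 1} := measure_mono hsub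
      _ ≤ (∫⁻ η, min (g t η) 1 ∂μ) / c :=
        meas_ge_le_lintegral_div ((hgmeas t).min measurable_const).aemeasurable hc0 hctop
  have hdiv : Tendsto (fun t : ℝ => (∫⁻ η, min (g t η) 1 ∂μ) / c) atTop (𝓝 0) := by
    have := ENNReal.Tendsto.div_const hItendsto (Or.inr hc0)
    simpa using this
  exact tendsto_of_tendsto_of_tendsto_of_le_of_le (tendsto_const_nhds) hdiv (fun t => zero_le) hupper
end
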